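/- arXiv:2412.07315 — 13 statements merged into one kernel-verified Lean document; each statement's English description precedes it below -/
import Mathlib

section
/- Let f : I → ℝ be strictly increasing with generalized inverse f⁽⁻¹⁾, let x ∈ I and u ∈ conv(f(I)). Then: f⁽⁻¹⁾(u) = x iff u ∈ [f₋(x), f₊(x)]; f⁽⁻¹⁾(u) < x iff u < f₋(x); f⁽⁻¹⁾(u) ≤ x iff u ≤ f₊(x); x < f⁽⁻¹⁾(u) iff f₊(x) < u; x ≤ f⁽⁻¹⁾(u) iff f₋(x) ≤ u. -/
open Set Filter Topology

/-- `finv` is the generalized inverse of the strictly increasing function `f : I → ℝ`: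
an increasing continuous left inverse of `f` mapping `conv (f '' I)` into `I`. -/
def IsGenInv (I : Set ℝ) (f finv : ℝ → ℝ) : Prop :=
  MonotoneOn finv (convexHull ℝ (f '' I)) ∧
  ContinuousOn finv (convexHull ℝ (f '' I)) ∧
  Set.MapsTo finv (convexHull ℝ (f '' I)) I ∧
  ∀ x ∈ I, finv (f x) = x

/-- The `n`-variable generalized quasiarithmetic mean `A_f^{[n]}` generated by `f`,
where `finv` is the generalized inverse of `f`. -/
noncomputable def qam (finv f : ℝ → ℝ) (n : ℕ) (x : Fin n → ℝ) : ℝ :=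
  finv ((∑ i, f (x i)) / n)

/-- characterization of the order relations between `x ∈ I` and `f⁽⁻¹⁾(u)`
for `u ∈ conv(f(I))` in terms of the one-sided limits of `f`. -/
theorem stmt4 (I : Set ℝ) (hIo : IsOpen I) (hIc : I.OrdConnected) (hne : I.Nonempty)
    (f fm fp finv : ℝ → ℝ) (hf : StrictMonoOn f I)
    (hfm : ∀ x ∈ I, Tendsto f (𝓝[<] x) (𝓝 (fm x)))
    (hfp : ∀ x ∈ I, Tendsto f (𝓝[>] x) (𝓝 (fp x)))
    (hinv : IsGenInv I f finv)
    (x u : ℝ) (hx : x ∈ I) (hu : u ∈ convexHull ℝ (f '' I)) :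
    (finv u = x ↔ u ∈ Icc (fm x) (fp x)) ∧
    (finv u < x ↔ u < fm x) ∧
    (finv u ≤ x ↔ u ≤ fp x) ∧
    (x < finv u ↔ fp x < u) ∧
    (x ≤ finv u ↔ fm x ≤ u) := by
  obtain ⟨hmono, hcont, hmaps, hli⟩ := hinv
  have hsub : f '' I ⊆ convexHull ℝ (f '' I) := subset_convexHull ℝ _
  -- L1 : fp x < u → x < finv u
  have L1 : fp x < u → x < finv u := by
    intro h
    have h1 : ∀ᶠ y in 𝓝[>] x, f y < u := (hfp x hx).eventually (eventually_lt_nhds h)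
    have h2 : ∀ᶠ y in 𝓝[>] x, y ∈ I :=
      mem_nhdsWithin_of_mem_nhds (hIo.mem_nhds hx)
    have h3 : ∀ᶠ y in 𝓝[>] x, x < y := eventually_mem_nhdsWithin
    obtain ⟨y, hy1, hy2, hy3⟩ := (h1.and (h2.and h3)).exists
    have : finv (f y) ≤ finv u := hmono (hsub ⟨y, hy2, rfl⟩) hu hy1.le
    rw [hli y hy2] at this
    exact hy3.trans_le this
  -- L3 : u < fm x → finv u < x
  have L3 : u < fm x → finv u < x := by
    intro h
    have h1 : ∀ᶠ y in 𝓝[<] x, u < f y := (hfm x hx).eventually (eventually_gt_nhds h)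
    have h2 : ∀ᶠ y in 𝓝[<] x, y ∈ I :=
      mem_nhdsWithin_of_mem_nhds (hIo.mem_nhds hx)
    have h3 : ∀ᶠ y in 𝓝[<] x, y < x := eventually_mem_nhdsWithin
    obtain ⟨y, hy1, hy2, hy3⟩ := (h1.and (h2.and h3)).exists
    have : finv u ≤ finv (f y) := hmono hu (hsub ⟨y, hy2, rfl⟩) hy1.le
    rw [hli y hy2] at this
    exact this.trans_lt hy3
  -- L2 : u ≤ fp x → finv u ≤ x
  have L2 : u ≤ fp x → finv u ≤ x := by
    intro h
    by_contra hlt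
    push_neg at hlt
    have hzI : finv u ∈ I := hmaps hu
    obtain ⟨w, hw1, hw2⟩ := exists_between hlt
    have hwI : w ∈ I := hIc.out hx hzI ⟨hw1.le, hw2.le⟩
    have hfpw : fp x ≤ f w := by
      refine le_of_tendsto (hfp x hx) ?_
      filter_upwards [Ioo_mem_nhdsGT_of_mem (show x ∈ Ico x w from ⟨le_refl x, hw1⟩)]
        with y hy
      exact hf.monotoneOn (hIc.out hx hwI ⟨hy.1.le, hy.2.le⟩) hwI hy.2.le
    have huw : u ≤ f w := h.trans hfpw
    have : finv u ≤ w := by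
      have := hmono hu (hsub ⟨w, hwI, rfl⟩) huw
      rwa [hli w hwI] at this
    exact absurd (this.trans_lt hw2) (lt_irrefl _)
  -- L4 : fm x ≤ u → x ≤ finv u
  have L4 : fm x ≤ u → x ≤ finv u := by
    intro h
    by_contra hlt
    push_neg at hlt
    have hzI : finv u ∈ I := hmaps hu
    obtain ⟨w, hw1, hw2⟩ := exists_between hlt
    have hwI : w ∈ I := hIc.out hzI hx ⟨hw1.le, hw2.le⟩
    have hfmw : f w ≤ fm x := by
      refine ge_of_tendsto (hfm x hx) ?_
      filter_upwards [Ioo_mem_nhdsLT_of_mem (show x ∈ Ioc w x from ⟨hw2, le_refl x⟩)]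
        with y hy
      exact hf.monotoneOn hwI (hIc.out hwI hx ⟨hy.1.le, hy.2.le⟩) hy.1.le
    have huw : f w ≤ u := hfmw.trans h
    have : w ≤ finv u := by
      have := hmono (hsub ⟨w, hwI, rfl⟩) hu huw
      rwa [hli w hwI] at this
    exact absurd (hw1.trans_le this) (lt_irrefl _)
  have i3 : finv u ≤ x ↔ u ≤ fp x := ⟨fun h => not_lt.mp fun h' => (L1 h').not_ge h, L2⟩
  have i4 : x < finv u ↔ fp x < u := ⟨fun h => not_le.mp fun h' => (L2 h').not_gt h, L1⟩
  have i5 : x ≤ finv u ↔ fm x ≤ u := ⟨fun h => not_lt.mp fun h' => (L3 h').not_ge h, L4⟩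
  have i2 : finv u < x ↔ u < fm x := ⟨fun h => not_le.mp fun h' => (L4 h').not_gt h, L3⟩
  refine ⟨⟨fun h => ⟨i5.mp h.ge, i3.mp h.le⟩,
    fun h => le_antisymm (i3.mpr h.2) (i5.mpr h.1)⟩, i2, i3, i4, i5⟩
end

section
/- Let f : I → ℝ be strictly increasing and n ∈ ℕ. The n-variable generalized quasiarithmetic mean A_f^{[n]}(x) := f⁽⁻¹⁾((f(x₁)+⋯+f(xₙ))/n) is well defined and satisfies min(x) ≤ A_f^{[n]}(x) ≤ max(x) for all x ∈ Iⁿ. -/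
/-!
If `a = min x` and `b = max x`, monotonicity of `f` puts the average of the `f (x i)` in
`[f a, f b]`, an interval inside the convex set `conv (f '' I)`. Applying the monotone left
inverse `finv` to `f a ≤ average ≤ f b` gives `a ≤ A_f(x) ≤ b`.
-/

open Set Filter Topology

open Finset
open scoped BigOperators

section MonotoneExpect

variable {ι α : Type*} [LinearOrder α] {I : Set α} {f : α → ℝ} {s : Finset ι} {x : ι → α}

theorem MonotoneOn.apply_inf'_le_expect (hs : s.Nonempty) (hf : MonotoneOn f I)
    (hx : ∀ i ∈ s, x i ∈ I) :
    f (s.inf' hs x) ≤ 𝔼 i ∈ s, f (x i) := by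
  obtain ⟨i, hi, hmin⟩ := s.exists_mem_eq_inf' hs x
  rw [hmin]
  exact le_expect hs fun j hj => hf (hx i hi) (hx j hj) (hmin ▸ inf'_le x hj)

theorem MonotoneOn.expect_le_apply_sup' (hs : s.Nonempty) (hf : MonotoneOn f I)
    (hx : ∀ i ∈ s, x i ∈ I) :
    𝔼 i ∈ s, f (x i) ≤ f (s.sup' hs x) := by
  obtain ⟨i, hi, hmax⟩ := s.exists_mem_eq_sup' hs x
  rw [hmax]
  exact expect_le hs fun j hj => hf (hx j hj) (hx i hi) (hmax ▸ le_sup' x hj)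

end MonotoneExpect

theorem Icc_subset_convexHull {s : Set ℝ} {a b : ℝ} (ha : a ∈ s) (hb : b ∈ s) :
    Icc a b ⊆ convexHull ℝ s :=
  (convex_convexHull ℝ s).ordConnected.out (subset_convexHull ℝ s ha) (subset_convexHull ℝ s hb)

namespace IsGenInv

variable {I : Set ℝ} {f finv : ℝ → ℝ} {a y : ℝ}

theorem le_apply_of_apply_le (hinv : IsGenInv I f finv) (ha : a ∈ I)
    (hy : y ∈ convexHull ℝ (f '' I)) (h : f a ≤ y) : a ≤ finv y := by
  have := hinv.1 (subset_convexHull ℝ _ (mem_image_of_mem f ha)) hy h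
  rwa [hinv.2.2.2 a ha] at this

theorem apply_le_of_le_apply (hinv : IsGenInv I f finv) (ha : a ∈ I)
    (hy : y ∈ convexHull ℝ (f '' I)) (h : y ≤ f a) : finv y ≤ a := by
  have := hinv.1 hy (subset_convexHull ℝ _ (mem_image_of_mem f ha)) h
  rwa [hinv.2.2.2 a ha] at this

end IsGenInv

theorem stmt5_general (I : Set ℝ)
    (f finv : ℝ → ℝ) (hf : StrictMonoOn f I) (hinv : IsGenInv I f finv)
    (n : ℕ) (x : Fin (n + 1) → ℝ) (hx : ∀ i, x i ∈ I) :
    (∑ i, f (x i)) / ((n + 1 : ℕ) : ℝ) ∈ convexHull ℝ (f '' I) ∧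
    qam finv f (n + 1) x ∈ I ∧
    Finset.univ.inf' Finset.univ_nonempty x ≤ qam finv f (n + 1) x ∧
    qam finv f (n + 1) x ≤ Finset.univ.sup' Finset.univ_nonempty x := by
  have hxI : ∀ i ∈ Finset.univ, x i ∈ I := fun i _ => hx i
  have ha : Finset.univ.inf' Finset.univ_nonempty x ∈ I := by
    obtain ⟨i, -, hi⟩ := Finset.univ.exists_mem_eq_inf' Finset.univ_nonempty x
    exact hi ▸ hx i
  have hb : Finset.univ.sup' Finset.univ_nonempty x ∈ I := by
    obtain ⟨i, -, hi⟩ := Finset.univ.exists_mem_eq_sup' Finset.univ_nonempty x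
    exact hi ▸ hx i
  have havg : (∑ i, f (x i)) / ((n + 1 : ℕ) : ℝ) = 𝔼 i, f (x i) := by
    rw [Fintype.expect_eq_sum_div_card, Fintype.card_fin]
  have hlo := hf.monotoneOn.apply_inf'_le_expect univ_nonempty hxI
  have hhi := hf.monotoneOn.expect_le_apply_sup' univ_nonempty hxI
  have hmem : 𝔼 i, f (x i) ∈ convexHull ℝ (f '' I) :=
    Icc_subset_convexHull (mem_image_of_mem f ha) (mem_image_of_mem f hb) ⟨hlo, hhi⟩
  rw [qam, havg]
  exact ⟨hmem, hinv.2.2.1 hmem, hinv.le_apply_of_apply_le ha hmem hlo,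
    hinv.apply_le_of_le_apply hb hmem hhi⟩

/-- the generalized quasiarithmetic mean is well defined (the average of the
values lies in `conv(f(I))`, so the mean lies in `I`) and lies between `min x` and `max x`. -/
theorem stmt5 (I : Set ℝ) (hIo : IsOpen I) (hIc : I.OrdConnected) (hne : I.Nonempty)
    (f finv : ℝ → ℝ) (hf : StrictMonoOn f I) (hinv : IsGenInv I f finv)
    (n : ℕ) (x : Fin (n + 1) → ℝ) (hx : ∀ i, x i ∈ I) :
    (∑ i, f (x i)) / ((n + 1 : ℕ) : ℝ) ∈ convexHull ℝ (f '' I) ∧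
    qam finv f (n + 1) x ∈ I ∧
    Finset.univ.inf' Finset.univ_nonempty x ≤ qam finv f (n + 1) x ∧
    qam finv f (n + 1) x ≤ Finset.univ.sup' Finset.univ_nonempty x :=
  stmt5_general I f finv hf hinv n x hx
end

section
/- Let f : I → ℝ be strictly increasing and n ∈ ℕ. Then for each i ∈ {1,…,n} and fixed values of the other coordinates, the map xᵢ ↦ A_f^{[n]}(x₁,…,xₙ) is increasing (not necessarily strictly) on I. -/
open Set Filter Topology

/-- the generalized quasiarithmetic mean is increasing in each coordinate. -/
theorem stmt6 (I : Set ℝ) (hIo : IsOpen I) (hIc : I.OrdConnected) (hne : I.Nonempty)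
    (f finv : ℝ → ℝ) (hf : StrictMonoOn f I) (hinv : IsGenInv I f finv)
    (n : ℕ) (x : Fin n → ℝ) (hx : ∀ i, x i ∈ I) (i : Fin n)
    (a b : ℝ) (ha : a ∈ I) (hb : b ∈ I) (hab : a ≤ b) :
    qam finv f n (Function.update x i a) ≤ qam finv f n (Function.update x i b) := by
  have hn : 0 < n := i.pos
  have hn' : (0:ℝ) < n := by exact_mod_cast hn
  have hupd : ∀ c : ℝ, c ∈ I → ∀ j, Function.update x i c j ∈ I := by
    intro c hc j
    rcases eq_or_ne j i with rfl | h
    · simpa using hc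
    · simpa [Function.update_of_ne h] using hx j
  have key : ∀ (y : Fin n → ℝ), (∀ j, y j ∈ I) →
      (∑ j, f (y j)) / n ∈ convexHull ℝ (f '' I) := by
    intro y hy
    have := Finset.centerMass_mem_convexHull (t := Finset.univ)
      (w := fun _ : Fin n => (1:ℝ)) (z := fun j => f (y j))
      (fun _ _ => zero_le_one) (by simpa using hn')
      (fun j _ => Set.mem_image_of_mem f (hy j))
    simpa [Finset.centerMass, div_eq_inv_mul, Finset.sum_div] using this
  have hle : (∑ j, f (Function.update x i a j)) / n ≤
      (∑ j, f (Function.update x i b j)) / n := by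
    gcongr with j _
    rcases eq_or_ne j i with rfl | h
    · simpa using hf.monotoneOn ha hb hab
    · simp [Function.update_of_ne h]
  exact hinv.1 (key _ (hupd a ha)) (key _ (hupd b hb)) hle
end

section
/- Let f : I → ℝ be strictly increasing, x ∈ I, and n ∈ ℕ with n ≥ 2. Then f is lower semicontinuous at x if and only if, for all y ∈ I with y < x, A_f^{[n]}(x,…,x,y) < x (with x appearing n−1 times). -/
open Set Filter Topology

/-- `f` is lower semicontinuous at `x` (i.e. `f₋(x) = f(x)`) iff
`A_f^{[n]}(x,…,x,y) < x` for all `y ∈ I` with `y < x`. -/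
theorem stmt7 (I : Set ℝ) (hIo : IsOpen I) (hIc : I.OrdConnected) (hne : I.Nonempty)
    (f fm finv : ℝ → ℝ) (hf : StrictMonoOn f I)
    (hfm : ∀ x ∈ I, Tendsto f (𝓝[<] x) (𝓝 (fm x)))
    (hinv : IsGenInv I f finv)
    (x : ℝ) (hx : x ∈ I) (n : ℕ) (hn : 2 ≤ n) :
    fm x = f x ↔
      ∀ y ∈ I, y < x → qam finv f n (fun i => if (i : ℕ) = 0 then y else x) < x := by
  obtain ⟨hmono, hcont, hmaps, hlinv⟩ := hinv
  obtain ⟨k, rfl⟩ : ∃ k, n = k + 1 := ⟨n - 1, by omega⟩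
  have hk : 1 ≤ k := by omega
  have hN : (2:ℝ) ≤ ((k+1:ℕ):ℝ) := by exact_mod_cast hn
  have hN0 : (0:ℝ) < ((k+1:ℕ):ℝ) := by linarith
  have hkR : (1:ℝ) ≤ (k:ℝ) := by exact_mod_cast hk
  have hIn : I ∈ 𝓝[<] x := mem_nhdsWithin_of_mem_nhds (hIo.mem_nhds hx)
  have hfm_le : fm x ≤ f x := by
    refine le_of_tendsto (hfm x hx) ?_
    filter_upwards [hIn, self_mem_nhdsWithin] with t ht htx
    exact (hf ht hx htx).le
  have happrox : ∀ c, c < fm x → ∃ y ∈ I, y < x ∧ c < f y := by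
    intro c hc
    have h1 : ∀ᶠ t in 𝓝[<] x, c < f t := (hfm x hx).eventually (eventually_gt_nhds hc)
    have hInE : ∀ᶠ t in 𝓝[<] x, t ∈ I := hIn
    obtain ⟨t, ht1, ht2, ht3⟩ := (h1.and (hInE.and self_mem_nhdsWithin)).exists
    exact ⟨t, ht2, ht3, ht1⟩
  have hsum : ∀ y : ℝ, (∑ i : Fin (k+1), f (if ((i:Fin (k+1)):ℕ) = 0 then y else x)) = f y + (k:ℝ) * f x := by
    intro y
    rw [Fin.sum_univ_succ]
    simp [Fin.val_succ]
  -- mean value and its basic bounds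
  have key : ∀ y ∈ I, y < x →
      qam finv f (k+1) (fun i => if (i : ℕ) = 0 then y else x)
        = finv ((f y + (k:ℝ) * f x) / ((k+1:ℕ):ℝ)) := by
    intro y hy hyx
    simp only [qam, hsum]
  have hullmem : ∀ y ∈ I, ∀ z, f y ≤ z → z ≤ f x → z ∈ convexHull ℝ (f '' I) := by
    intro y hy z h1 h2
    have : z ∈ segment ℝ (f y) (f x) := by
      rw [segment_eq_Icc (le_trans h1 h2)]
      exact ⟨h1, h2⟩
    exact segment_subset_convexHull (mem_image_of_mem f hy) (mem_image_of_mem f hx) this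
  constructor
  · intro h y hy hyx
    rw [key y hy hyx]
    set m : ℝ := (f y + (k:ℝ) * f x) / ((k+1:ℕ):ℝ) with hm
    have hfy : f y < f x := hf hy hx hyx
    have hm_lt : m < f x := by
      rw [hm, div_lt_iff₀ hN0]
      push_cast
      nlinarith
    have hm_ge : f y ≤ m := by
      rw [hm, le_div_iff₀ hN0]
      push_cast
      nlinarith
    obtain ⟨t, ht, htx, htm⟩ := happrox m (h ▸ hm_lt)
    have : finv m ≤ finv (f t) :=
      hmono (hullmem y hy m hm_ge hm_lt.le)
        (subset_convexHull ℝ _ (mem_image_of_mem f ht)) htm.le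
    rw [hlinv t ht] at this
    exact lt_of_le_of_lt this htx
  · intro h
    by_contra hne'
    have hlt : fm x < f x := lt_of_le_of_ne hfm_le hne'
    have hc : ((k+1:ℕ):ℝ) * fm x - (k:ℝ) * f x < fm x := by
      push_cast; nlinarith
    obtain ⟨y, hy, hyx, hfy⟩ := happrox _ hc
    have hfyx : f y < f x := hf hy hx hyx
    set m : ℝ := (f y + (k:ℝ) * f x) / ((k+1:ℕ):ℝ) with hm
    have hm_gt : fm x < m := by
      rw [hm, lt_div_iff₀ hN0]
      push_cast at hfy ⊢
      nlinarith
    have hm_lt : m < f x := by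
      rw [hm, div_lt_iff₀ hN0]; push_cast; nlinarith
    have hm_ge : f y ≤ m := by
      rw [hm, le_div_iff₀ hN0]; push_cast; nlinarith
    have hmhull : m ∈ convexHull ℝ (f '' I) := hullmem y hy m hm_ge hm_lt.le
    -- finv m = x
    have hle : finv m ≤ x := by
      have := hmono hmhull (subset_convexHull ℝ _ (mem_image_of_mem f hx)) hm_lt.le
      rwa [hlinv x hx] at this
    have hge : x ≤ finv m := by
      by_contra hgt
      push_neg at hgt
      obtain ⟨ε, hε, hball⟩ := Metric.isOpen_iff.mp hIo x hx
      set t : ℝ := (max (finv m) (x - ε) + x) / 2 with htdef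
      have ht1 : finv m < t := by
        have := le_max_left (finv m) (x - ε)
        have hx2 : max (finv m) (x - ε) < x := max_lt hgt (by linarith)
        rw [htdef]; linarith [le_max_left (finv m) (x - ε)]
      have ht2 : t < x := by
        have hx2 : max (finv m) (x - ε) < x := max_lt hgt (by linarith)
        rw [htdef]; linarith
      have ht3 : x - ε < t := by
        have := le_max_right (finv m) (x - ε)
        rw [htdef]; linarith
      have htI : t ∈ I := by
        apply hball
        rw [Metric.mem_ball, Real.dist_eq, abs_lt]
        constructor <;> linarith
      -- f t ≤ fm x
      have hftfm : f t ≤ fm x := by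
        refine ge_of_tendsto (hfm x hx) ?_
        have h1 : ∀ᶠ s in 𝓝[<] x, t < s :=
          eventually_nhdsWithin_of_eventually_nhds (eventually_gt_nhds ht2)
        filter_upwards [hIn, h1] with s hs hts
        exact (hf htI hs hts).le
      have : t ≤ finv m := by
        have := hmono (subset_convexHull ℝ _ (mem_image_of_mem f htI)) hmhull
          (le_trans hftfm hm_gt.le)
        rwa [hlinv t htI] at this
      linarith
    have : qam finv f (k+1) (fun i => if (i : ℕ) = 0 then y else x) = x := by
      rw [key y hy hyx, ← hm, le_antisymm hle hge]
    have h2 := h y hy hyx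
    rw [this] at h2
    exact lt_irrefl x h2
end

section
/- Let f : I → ℝ be strictly increasing. If there exists n ≥ 2 such that A_f^{[n]} is a strict mean, i.e., min(x) < A_f^{[n]}(x) < max(x) for every non-constant vector x ∈ Iⁿ, then f is continuous on I. -/
open Set Filter Topology

lemma sum_vec (n : ℕ) (hn : 1 ≤ n) (f : ℝ → ℝ) (s t : ℝ) :
    ∑ i : Fin n, f (if i = (⟨0, by omega⟩ : Fin n) then s else t)
      = f s + ((n : ℝ) - 1) * f t := by
  have h : ∀ i : Fin n, f (if i = (⟨0, by omega⟩ : Fin n) then s else t)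
      = (if i = (⟨0, by omega⟩ : Fin n) then f s - f t else 0) + f t := by
    intro i; split <;> ring
  rw [Finset.sum_congr rfl (fun i _ => h i), Finset.sum_add_distrib,
    Finset.sum_ite_eq' Finset.univ _ (fun _ => f s - f t)]
  simp [Finset.card_univ]
  ring

/-- if for some `n ≥ 2` the mean `A_f^{[n]}` is strict, i.e.
`min x < A_f^{[n]} x < max x` for every non-constant vector `x ∈ Iⁿ`,
then `f` is continuous on `I`. -/
theorem stmt9 (I : Set ℝ) (hIo : IsOpen I) (hIc : I.OrdConnected) (hne : I.Nonempty)
    (f finv : ℝ → ℝ) (hf : StrictMonoOn f I) (hinv : IsGenInv I f finv)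
    (n : ℕ) (hn : 2 ≤ n)
    (hstrict : ∀ x : Fin n → ℝ, (∀ i, x i ∈ I) → (∃ i j, x i ≠ x j) →
      (∃ i, x i < qam finv f n x) ∧ (∃ j, qam finv f n x < x j)) :
    ContinuousOn f I := by
  obtain ⟨hmono, hconti, hmaps, hlinv⟩ := hinv
  have hsub : f '' I ⊆ convexHull ℝ (f '' I) := subset_convexHull ℝ _
  have hconv : (convexHull ℝ (f '' I)).OrdConnected :=
    (convex_convexHull ℝ (f '' I)).ordConnected
  have hn0 : (0:ℝ) < n := by
    have : (0:ℕ) < n := by omega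
    exact_mod_cast this
  have hn1 : (1:ℝ) ≤ (n:ℝ) - 1 := by
    have : (2:ℝ) ≤ (n:ℝ) := by exact_mod_cast hn
    linarith
  intro t ht
  obtain ⟨δ, hδ, hball⟩ := Metric.isOpen_iff.mp hIo t ht
  have hballI : ∀ u : ℝ, |u - t| < δ → u ∈ I := fun u hu =>
    hball (by simpa [Metric.mem_ball, Real.dist_eq] using hu)
  apply ContinuousAt.continuousWithinAt
  refine hf.continuousAt_of_exists_between (hIo.mem_nhds ht) ?_ ?_
  · -- left side: ∀ b < f t, ∃ c ∈ I, f c ∈ Ico b (f t)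
    intro b hb
    by_contra hcon
    push_neg at hcon
    have hgap : ∀ c ∈ I, c < t → f c < b := by
      intro c hcI hct
      by_contra h'
      push_neg at h'
      exact hcon c hcI ⟨h', hf hcI ht hct⟩
    set A := f '' (I ∩ Iio t) with hA
    have hA_ne : A.Nonempty := by
      refine ⟨f (t - δ/2), t - δ/2, ⟨hballI _ ?_, by simp; linarith⟩, rfl⟩
      rw [show t - δ/2 - t = -(δ/2) by ring, abs_neg, abs_of_pos (by linarith)]
      linarith
    have hA_bdd : BddAbove A := by
      refine ⟨b, ?_⟩
      rintro y ⟨c, ⟨hcI, hct⟩, rfl⟩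
      exact (hgap c hcI hct).le
    set L := sSup A with hL
    have hLb : L ≤ b := by
      apply csSup_le hA_ne
      rintro y ⟨c, ⟨hcI, hct⟩, rfl⟩
      exact (hgap c hcI hct).le
    have hLft : L < f t := lt_of_le_of_lt hLb hb
    have hfcL : ∀ c ∈ I, c < t → f c ≤ L := fun c hcI hct =>
      le_csSup hA_bdd ⟨c, ⟨hcI, hct⟩, rfl⟩
    obtain ⟨y, hyA, hy⟩ := exists_lt_of_lt_csSup hA_ne
      (show L - ((n:ℝ)-1)*(f t - L) < L by nlinarith)
    obtain ⟨s, ⟨hsI, hst⟩, rfl⟩ := hyA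
    have hst : s < t := hst
    set x : Fin n → ℝ := fun i => if i = (⟨0, by omega⟩ : Fin n) then s else t with hxdef
    have hxI : ∀ i, x i ∈ I := by
      intro i; rw [hxdef]; dsimp only; split <;> assumption
    have h01 : (⟨1, by omega⟩ : Fin n) ≠ (⟨0, by omega⟩ : Fin n) := by
      simp [Fin.ext_iff]
    have hxne : ∃ i j, x i ≠ x j := by
      refine ⟨⟨1, by omega⟩, ⟨0, by omega⟩, ?_⟩
      rw [hxdef]; dsimp only
      rw [if_neg h01, if_pos rfl]
      exact (ne_of_lt hst).symm
    set m := (f s + ((n:ℝ)-1) * f t)/n with hm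
    have hsum : (∑ i, f (x i)) = f s + ((n:ℝ)-1) * f t := by
      rw [hxdef]; exact sum_vec n (by omega) f s t
    have hqam : qam finv f n x = finv m := by
      show finv ((∑ i, f (x i)) / n) = finv m
      rw [hsum, hm]
    have hfsL : f s ≤ L := hfcL s hsI hst
    have hmL : L < m := by rw [hm, lt_div_iff₀ hn0]; nlinarith
    have hmft : m < f t := by rw [hm, div_lt_iff₀ hn0]; nlinarith
    have hmmem : m ∈ convexHull ℝ (f '' I) :=
      hconv.out (hsub ⟨s, hsI, rfl⟩) (hsub ⟨t, ht, rfl⟩)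
        ⟨le_of_lt (lt_of_le_of_lt hfsL hmL), hmft.le⟩
    have hqt : finv m < t := by
      obtain ⟨_, j, hj⟩ := hstrict x hxI hxne
      rw [hqam] at hj
      have hxj : x j ≤ t := by
        rw [hxdef]; dsimp only; split
        · exact hst.le
        · exact le_rfl
      exact lt_of_lt_of_le hj hxj
    have hlow : ∀ c ∈ I, c < t → c ≤ finv m := by
      intro c hcI hct
      have h1 : f c ≤ m := le_of_lt (lt_of_le_of_lt (hfcL c hcI hct) hmL)
      have h2 := hmono (hsub ⟨c, hcI, rfl⟩) hmmem h1
      rwa [hlinv c hcI] at h2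
    set c := t - min (t - finv m) δ / 2 with hc
    have hc1 : 0 < min (t - finv m) δ := lt_min (by linarith) hδ
    have hcI : c ∈ I := by
      apply hballI
      rw [hc, show t - min (t - finv m) δ / 2 - t = -(min (t - finv m) δ / 2) by ring,
        abs_neg, abs_of_pos (by linarith)]
      have := min_le_right (t - finv m) δ
      linarith
    have hct : c < t := by rw [hc]; linarith
    have h3 : c ≤ finv m := hlow c hcI hct
    have h4 : finv m < c := by
      have h2 := min_le_left (t - finv m) δ
      rw [hc]; linarith
    linarith
  · -- right side: ∀ b > f t, ∃ c ∈ I, f c ∈ Ioc (f t) b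
    intro b hb
    by_contra hcon
    push_neg at hcon
    have hgap : ∀ c ∈ I, t < c → b < f c := by
      intro c hcI hct
      by_contra h'
      push_neg at h'
      exact hcon c hcI ⟨hf ht hcI hct, h'⟩
    set A := f '' (I ∩ Ioi t) with hA
    have hA_ne : A.Nonempty := by
      refine ⟨f (t + δ/2), t + δ/2, ⟨hballI _ ?_, by simp; linarith⟩, rfl⟩
      rw [show t + δ/2 - t = δ/2 by ring, abs_of_pos (by linarith)]
      linarith
    have hA_bdd : BddBelow A := by
      refine ⟨b, ?_⟩
      rintro y ⟨c, ⟨hcI, hct⟩, rfl⟩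
      exact (hgap c hcI hct).le
    set R := sInf A with hR
    have hRb : b ≤ R := by
      apply le_csInf hA_ne
      rintro y ⟨c, ⟨hcI, hct⟩, rfl⟩
      exact (hgap c hcI hct).le
    have hftR : f t < R := lt_of_lt_of_le hb hRb
    have hfcR : ∀ c ∈ I, t < c → R ≤ f c := fun c hcI hct =>
      csInf_le hA_bdd ⟨c, ⟨hcI, hct⟩, rfl⟩
    obtain ⟨y, hyA, hy⟩ := exists_lt_of_csInf_lt hA_ne
      (show R < R + ((n:ℝ)-1)*(R - f t) by nlinarith)
    obtain ⟨s, ⟨hsI, hst⟩, rfl⟩ := hyA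
    have hst : t < s := hst
    set x : Fin n → ℝ := fun i => if i = (⟨0, by omega⟩ : Fin n) then s else t with hxdef
    have hxI : ∀ i, x i ∈ I := by
      intro i; rw [hxdef]; dsimp only; split <;> assumption
    have h01 : (⟨1, by omega⟩ : Fin n) ≠ (⟨0, by omega⟩ : Fin n) := by
      simp [Fin.ext_iff]
    have hxne : ∃ i j, x i ≠ x j := by
      refine ⟨⟨1, by omega⟩, ⟨0, by omega⟩, ?_⟩
      rw [hxdef]; dsimp only
      rw [if_neg h01, if_pos rfl]
      exact (ne_of_gt hst).symm
    set m := (f s + ((n:ℝ)-1) * f t)/n with hm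
    have hsum : (∑ i, f (x i)) = f s + ((n:ℝ)-1) * f t := by
      rw [hxdef]; exact sum_vec n (by omega) f s t
    have hqam : qam finv f n x = finv m := by
      show finv ((∑ i, f (x i)) / n) = finv m
      rw [hsum, hm]
    have hfsR : R ≤ f s := hfcR s hsI hst
    have hmR : m < R := by rw [hm, div_lt_iff₀ hn0]; nlinarith
    have hftm : f t < m := by rw [hm, lt_div_iff₀ hn0]; nlinarith
    have hmmem : m ∈ convexHull ℝ (f '' I) :=
      hconv.out (hsub ⟨t, ht, rfl⟩) (hsub ⟨s, hsI, rfl⟩)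
        ⟨hftm.le, le_of_lt (lt_of_lt_of_le hmR hfsR)⟩
    have hqt : t < finv m := by
      obtain ⟨⟨i, hi⟩, _⟩ := hstrict x hxI hxne
      rw [hqam] at hi
      have hxi : t ≤ x i := by
        rw [hxdef]; dsimp only; split
        · exact hst.le
        · exact le_rfl
      exact lt_of_le_of_lt hxi hi
    have hup : ∀ c ∈ I, t < c → finv m ≤ c := by
      intro c hcI hct
      have h1 : m ≤ f c := le_of_lt (lt_of_lt_of_le hmR (hfcR c hcI hct))
      have h2 := hmono hmmem (hsub ⟨c, hcI, rfl⟩) h1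
      rwa [hlinv c hcI] at h2
    set c := t + min (finv m - t) δ / 2 with hc
    have hc1 : 0 < min (finv m - t) δ := lt_min (by linarith) hδ
    have hcI : c ∈ I := by
      apply hballI
      rw [hc, show t + min (finv m - t) δ / 2 - t = min (finv m - t) δ / 2 by ring,
        abs_of_pos (by linarith)]
      have := min_le_right (finv m - t) δ
      linarith
    have hct : t < c := by rw [hc]; linarith
    have h3 : finv m ≤ c := hup c hcI hct
    have h4 : c < finv m := by
      have h2 := min_le_left (finv m - t) δ
      rw [hc]; linarith
    linarith
end

section
/- Let f : I → ℝ be strictly increasing. If the sequence of means (A_f^{[n]})_{n∈ℕ} is associative (i.e., for all n, all k ∈ {1,…,n−1} and x ∈ Iⁿ, A_f^{[n]}(x) = A_f^{[n]}(y,…,y,x_{k+1},…,xₙ) where y = A_f^{[k]}(x₁,…,x_k)), then f is continuous on I. -/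
/-!
Associativity applied to the first two arguments shows that if `A₂(u, x₀) = x₀`, then one
copy of `u` can be traded for a copy of `x₀` in any longer mean; hence the mean of `n + 2`
copies of `u` and one copy of `x₀` is still `x₀`. The arguments of these means tend to `f u`,
so continuity of the generalized inverse forces `u = x₀`.

If `f` jumped at `x₀`, the generalized inverse would be constantly `x₀` on the gap of `f '' I`
next to `f x₀`, and a point `u ≠ x₀` with `f u` close to the edge of the gap would put
`(f u + f x₀) / 2` inside it.
-/

open Set Filter Topology

def QamAssociative (I : Set ℝ) (finv f : ℝ → ℝ) : Prop :=
  ∀ n k : ℕ, 0 < k → ∀ hkn : k < n, ∀ x : Fin n → ℝ, (∀ i, x i ∈ I) →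
    qam finv f n x = qam finv f n
      (fun i => if (i : ℕ) < k then qam finv f k (fun j => x ⟨j.1, j.2.trans hkn⟩) else x i)

lemma sum_ite_val_lt_eq {n j : ℕ} (hj : j ≤ n) (a b : ℝ) :
    ∑ i : Fin n, (if (i : ℕ) < j then a else b) = j * a + (n - j) * b := by
  rw [Finset.sum_ite, Finset.sum_const, Finset.sum_const, Fin.card_filter_val_lt,
    Finset.filter_not, Finset.card_sdiff_of_subset (Finset.filter_subset _ _),
    Fin.card_filter_val_lt, Finset.card_univ, Fintype.card_fin, min_eq_right hj]
  simp [Nat.cast_sub hj]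

section

variable {I : Set ℝ} {f g : ℝ → ℝ}

-- `QamAssociative` only allows `k < n`, so at least one argument has to follow the pair.
lemma QamAssociative.replace_pair (hA : QamAssociative I g f) {u v : ℝ} (hu : u ∈ I)
    (hv : v ∈ I) {n : ℕ} (z : Fin (n + 1) → ℝ) (hz : ∀ i, z i ∈ I) :
    g ((f u + f v + ∑ i, f (z i)) / (n + 3)) =
      g ((2 * f (g ((f u + f v) / 2)) + ∑ i, f (z i)) / (n + 3)) := by
  have hx : ∀ i, (Fin.cons u (Fin.cons v z) : Fin (n + 3) → ℝ) i ∈ I :=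
    Fin.cases hu (Fin.cases hv hz)
  have := hA (n + 3) 2 two_pos (by omega) _ hx
  simpa [qam, Fin.sum_univ_succ, Fin.sum_univ_two, add_assoc, two_mul] using this

lemma QamAssociative.weighted_mean_eq_of_pair_mean_eq (hA : QamAssociative I g f) {u x₀ : ℝ}
    (hu : u ∈ I) (hx₀ : x₀ ∈ I) (hfix : g (f x₀) = x₀) (hmid : g ((f u + f x₀) / 2) = x₀)
    (n : ℕ) : g (((n + 2) * f u + f x₀) / (n + 3)) = x₀ := by
  suffices h : ∀ j ≤ n + 2, g ((j * f u + (n + 3 - j) * f x₀) / (n + 3)) = x₀ by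
    convert h (n + 2) le_rfl using 4 <;> push_cast <;> ring
  intro j hj
  induction j with
  | zero =>
    rw [show ((0 : ℕ) * f u + (n + 3 - (0 : ℕ)) * f x₀) / (n + 3) = f x₀ by field_simp; simp]
    exact hfix
  | succ j ih =>
    have hz : ∀ i : Fin (n + 1), (if (i : ℕ) < j then u else x₀) ∈ I := fun i => by
      split_ifs <;> assumption
    have step := hA.replace_pair hu hx₀ _ hz
    simp only [apply_ite f, sum_ite_val_lt_eq (show j ≤ n + 1 by omega), hmid,
      Nat.cast_add_one] at step
    calc _ = g ((f u + f x₀ + (j * f u + (n + 1 - j) * f x₀)) / (n + 3)) := by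
          push_cast; ring_nf
      _ = g ((j * f u + (n + 3 - j) * f x₀) / (n + 3)) := by rw [step]; ring_nf
      _ = x₀ := ih (by omega)

lemma QamAssociative.eq_of_pair_mean_eq (hA : QamAssociative I g f)
    (hg : ContinuousOn g (convexHull ℝ (f '' I))) {u x₀ : ℝ} (hu : u ∈ I) (hx₀ : x₀ ∈ I)
    (hfu : g (f u) = u) (hfx₀ : g (f x₀) = x₀) (hmid : g ((f u + f x₀) / 2) = x₀) : u = x₀ := by
  set w : ℕ → ℝ := fun n => ((n + 2) * f u + f x₀) / (n + 3)
  have hw_mem : ∀ n, w n ∈ convexHull ℝ (f '' I) := fun n => by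
    have := convex_convexHull ℝ (f '' I) (subset_convexHull ℝ _ (mem_image_of_mem f hu))
      (subset_convexHull ℝ _ (mem_image_of_mem f hx₀))
      (a := (n + 2) / (n + 3)) (b := 1 / (n + 3)) (by positivity) (by positivity)
      (by field_simp; ring)
    convert this using 1
    simp only [w, smul_eq_mul]
    field_simp
  have hw_lim : Tendsto w atTop (𝓝 (f u)) := by
    have h := ((tendsto_const_nhds (x := f x₀ - f u)).div_atTop
      (tendsto_natCast_atTop_atTop.atTop_add (tendsto_const_nhds (x := (3 : ℝ))))).const_add (f u)
    rw [add_zero] at h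
    convert h using 2 with n
    simp only [w]
    field_simp
    ring
  have hgw : Tendsto (g ∘ w) atTop (𝓝 u) :=
    hfu ▸ ((hg _ (subset_convexHull ℝ _ (mem_image_of_mem f hu))).tendsto.comp
      (tendsto_nhdsWithin_iff.2 ⟨hw_lim, Eventually.of_forall hw_mem⟩))
  have hgw_const : g ∘ w = fun _ => x₀ :=
    funext (hA.weighted_mean_eq_of_pair_mean_eq hu hx₀ hfx₀ hmid)
  rw [hgw_const] at hgw
  exact tendsto_nhds_unique hgw tendsto_const_nhds

lemma IsGenInv.eq_of_separates (hinv : IsGenInv I f g) (hI : I.OrdConnected) {x₀ t : ℝ}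
    (hx₀ : x₀ ∈ I) (ht : t ∈ convexHull ℝ (f '' I)) (hleft : ∀ c ∈ I, c < x₀ → f c < t)
    (hright : ∀ c ∈ I, x₀ < c → t < f c) : g t = x₀ := by
  obtain ⟨hmono, -, hmaps, hgf⟩ := hinv
  have hmem : ∀ c ∈ I, f c ∈ convexHull ℝ (f '' I) := fun c hc =>
    subset_convexHull ℝ _ (mem_image_of_mem f hc)
  rcases lt_trichotomy (g t) x₀ with hlt | heq | hgt
  · have hw : (g t + x₀) / 2 ∈ I := hI.out (hmaps ht) hx₀ ⟨by linarith, by linarith⟩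
    have := hgf _ hw ▸ hmono (hmem _ hw) ht (hleft _ hw (by linarith)).le
    linarith
  · exact heq
  · have hw : (g t + x₀) / 2 ∈ I := hI.out hx₀ (hmaps ht) ⟨by linarith, by linarith⟩
    have := hgf _ hw ▸ hmono ht (hmem _ hw) (hright _ hw (by linarith)).le
    linarith

lemma QamAssociative.eq_of_pair_mean_separates (hA : QamAssociative I g f)
    (hinv : IsGenInv I f g) (hI : I.OrdConnected) {u x₀ : ℝ} (hu : u ∈ I) (hx₀ : x₀ ∈ I)
    (hleft : ∀ c ∈ I, c < x₀ → f c < (f u + f x₀) / 2)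
    (hright : ∀ c ∈ I, x₀ < c → (f u + f x₀) / 2 < f c) : u = x₀ := by
  have hmid_mem : (f u + f x₀) / 2 ∈ convexHull ℝ (f '' I) := by
    have := convex_convexHull ℝ (f '' I) (subset_convexHull ℝ _ (mem_image_of_mem f hu))
      (subset_convexHull ℝ _ (mem_image_of_mem f hx₀)) (a := 1 / 2) (b := 1 / 2)
      (by norm_num) (by norm_num) (by norm_num)
    convert this using 1
    simp only [smul_eq_mul]
    ring
  exact hA.eq_of_pair_mean_eq hinv.2.1 hu hx₀ (hinv.2.2.2 u hu) (hinv.2.2.2 x₀ hx₀)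
    (hinv.eq_of_separates hI hx₀ hmid_mem hleft hright)

lemma exists_image_mem_Ico_of_qamAssociative (hIo : IsOpen I) (hIc : I.OrdConnected)
    (hf : StrictMonoOn f I) (hinv : IsGenInv I f g) (hA : QamAssociative I g f) {x₀ : ℝ}
    (hx₀ : x₀ ∈ I) : ∀ b < f x₀, ∃ c ∈ I, f c ∈ Ico b (f x₀) := by
  intro b hb
  by_contra! hgap
  have hbelow : ∀ c ∈ I, c < x₀ → f c < b := fun c hc hcx =>
    not_le.1 fun h => hgap c hc ⟨h, hf hc hx₀ hcx⟩
  have hnear : ∀ᶠ a in 𝓝[<] x₀, a ∈ I ∧ a < x₀ :=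
    (eventually_nhdsWithin_of_eventually_nhds (hIo.eventually_mem hx₀)).and self_mem_nhdsWithin
  obtain ⟨a, haI, hax⟩ := hnear.exists
  have hne : (f '' (I ∩ Iio x₀)).Nonempty := ⟨f a, a, ⟨haI, hax⟩, rfl⟩
  have hbdd : BddAbove (f '' (I ∩ Iio x₀)) := ⟨b, by
    rintro _ ⟨c, ⟨hc, hcx⟩, rfl⟩; exact (hbelow c hc hcx).le⟩
  set L := sSup (f '' (I ∩ Iio x₀))
  have hL : ∀ c ∈ I, c < x₀ → f c ≤ L := fun c hc hcx => le_csSup hbdd ⟨c, ⟨hc, hcx⟩, rfl⟩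
  have hLb : L ≤ b := csSup_le hne (by rintro _ ⟨c, ⟨hc, hcx⟩, rfl⟩; exact (hbelow c hc hcx).le)
  obtain ⟨_, ⟨u, ⟨hu, hux⟩, rfl⟩, hLu⟩ :=
    exists_lt_of_lt_csSup hne (show 2 * L - f x₀ < L by linarith)
  have hfux := hf hu hx₀ hux
  exact hux.ne (hA.eq_of_pair_mean_separates hinv hIc hu hx₀
    (fun c hc hcx => by linarith [hL c hc hcx]) (fun c hc hxc => by linarith [hf hx₀ hc hxc]))

lemma exists_image_mem_Ioc_of_qamAssociative (hIo : IsOpen I) (hIc : I.OrdConnected)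
    (hf : StrictMonoOn f I) (hinv : IsGenInv I f g) (hA : QamAssociative I g f) {x₀ : ℝ}
    (hx₀ : x₀ ∈ I) : ∀ b > f x₀, ∃ c ∈ I, f c ∈ Ioc (f x₀) b := by
  intro b hb
  by_contra! hgap
  have habove : ∀ c ∈ I, x₀ < c → b < f c := fun c hc hxc =>
    not_le.1 fun h => hgap c hc ⟨hf hx₀ hc hxc, h⟩
  have hnear : ∀ᶠ a in 𝓝[>] x₀, a ∈ I ∧ x₀ < a :=
    (eventually_nhdsWithin_of_eventually_nhds (hIo.eventually_mem hx₀)).and self_mem_nhdsWithin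
  obtain ⟨a, haI, hxa⟩ := hnear.exists
  have hne : (f '' (I ∩ Ioi x₀)).Nonempty := ⟨f a, a, ⟨haI, hxa⟩, rfl⟩
  have hbdd : BddBelow (f '' (I ∩ Ioi x₀)) := ⟨b, by
    rintro _ ⟨c, ⟨hc, hxc⟩, rfl⟩; exact (habove c hc hxc).le⟩
  set R := sInf (f '' (I ∩ Ioi x₀))
  have hR : ∀ c ∈ I, x₀ < c → R ≤ f c := fun c hc hxc => csInf_le hbdd ⟨c, ⟨hc, hxc⟩, rfl⟩
  have hbR : b ≤ R := le_csInf hne (by rintro _ ⟨c, ⟨hc, hxc⟩, rfl⟩; exact (habove c hc hxc).le)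
  obtain ⟨_, ⟨u, ⟨hu, hxu⟩, rfl⟩, huR⟩ :=
    exists_lt_of_csInf_lt hne (show R < 2 * R - f x₀ by linarith)
  have hfxu := hf hx₀ hu hxu
  exact hxu.ne' (hA.eq_of_pair_mean_separates hinv hIc hu hx₀
    (fun c hc hcx => by linarith [hf hc hx₀ hcx]) (fun c hc hxc => by linarith [hR c hc hxc]))

end

theorem stmt10_general (I : Set ℝ) (hIo : IsOpen I) (hIc : I.OrdConnected)
    (f finv : ℝ → ℝ) (hf : StrictMonoOn f I) (hinv : IsGenInv I f finv)
    (hassoc : ∀ n k : ℕ, 0 < k → ∀ hkn : k < n, ∀ x : Fin n → ℝ, (∀ i, x i ∈ I) →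
      qam finv f n x = qam finv f n
        (fun i => if (i : ℕ) < k then qam finv f k (fun j => x ⟨j.1, j.2.trans hkn⟩)
          else x i)) :
    ContinuousOn f I := fun _ hx₀ =>
  (hf.continuousAt_of_exists_between (hIo.mem_nhds hx₀)
    (exists_image_mem_Ico_of_qamAssociative hIo hIc hf hinv hassoc hx₀)
    (exists_image_mem_Ioc_of_qamAssociative hIo hIc hf hinv hassoc hx₀)).continuousWithinAt

/-- if the sequence of means `(A_f^{[n]})ₙ` is associative, then `f` is
continuous on `I`. -/
theorem stmt10 (I : Set ℝ) (hIo : IsOpen I) (hIc : I.OrdConnected) (hne : I.Nonempty)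
    (f finv : ℝ → ℝ) (hf : StrictMonoOn f I) (hinv : IsGenInv I f finv)
    (hassoc : ∀ n k : ℕ, 0 < k → ∀ hkn : k < n, ∀ x : Fin n → ℝ, (∀ i, x i ∈ I) →
      qam finv f n x = qam finv f n
        (fun i => if (i : ℕ) < k then qam finv f k (fun j => x ⟨j.1, j.2.trans hkn⟩)
          else x i)) :
    ContinuousOn f I :=
  stmt10_general I hIo hIc f finv hf hinv hassoc
end

section
/- Let f : I → ℝ be strictly increasing and n ∈ ℕ. For all x ∈ Iⁿ, lim_{u→x⁻} A_f^{[n]}(u) = A_{f₋}^{[n]}(x) ≤ A_f^{[n]}(x) ≤ A_{f₊}^{[n]}(x) = lim_{u→x⁺} A_f^{[n]}(u), where the limits are taken coordinatewise from the left and right respectively. -/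
open Set Filter Topology

/-! A one-sided limit of a monotone function at an interior point is squeezed between two of
its values, so it lies in the convex hull of the range, where the generalized inverse is
monotone and continuous. Averaging the coordinates therefore preserves the inequalities
`f₋ ≤ f ≤ f₊`, and the coordinatewise one-sided limits of the averages pass through the
generalized inverse. -/

lemma Convex.sum_div_card_mem {ι : Type*} [Fintype ι] [Nonempty ι] {s : Set ℝ}
    (hs : Convex ℝ s) {z : ι → ℝ} (hz : ∀ i, z i ∈ s) :
    (∑ i, z i) / Fintype.card ι ∈ s := by
  have := hs.centerMass_mem (t := Finset.univ) (w := fun _ => (1 : ℝ))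
    (fun _ _ => zero_le_one) (by simpa using Fintype.card_pos) (fun i _ => hz i)
  simpa [Finset.centerMass, div_eq_inv_mul] using this

lemma Convex.sum_div_mem {s : Set ℝ} (hs : Convex ℝ s) {n : ℕ} [NeZero n] {z : Fin n → ℝ}
    (hz : ∀ i, z i ∈ s) : (∑ i, z i) / n ∈ s := by
  simpa using hs.sum_div_card_mem hz

lemma tendsto_apply_nhdsWithin_univ_pi {ι : Type*} [Finite ι] {X : ι → Type*}
    [∀ i, TopologicalSpace (X i)] (s : ∀ i, Set (X i)) (x : ∀ i, X i) (i : ι) :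
    Tendsto (fun u => u i) (𝓝[univ.pi s] x) (𝓝[s i] (x i)) := by
  rw [nhdsWithin_pi_univ_eq]
  exact tendsto_eval_pi _ i

namespace MonotoneOn

variable {I : Set ℝ} {f : ℝ → ℝ} {x y L : ℝ}

lemma le_of_tendsto_nhdsLT (hf : MonotoneOn f I) (hx : x ∈ I) (hI : I ∈ 𝓝[<] x)
    (h : Tendsto f (𝓝[<] x) (𝓝 L)) : L ≤ f x :=
  le_of_tendsto h <| mem_of_superset (inter_mem hI self_mem_nhdsWithin)
    fun _ ht => hf ht.1 hx (le_of_lt ht.2)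

lemma le_of_tendsto_nhdsLT_of_lt (hf : MonotoneOn f I) (hy : y ∈ I) (hyx : y < x)
    (hI : I ∈ 𝓝[<] x) (h : Tendsto f (𝓝[<] x) (𝓝 L)) : f y ≤ L :=
  ge_of_tendsto h <| mem_of_superset (inter_mem hI (Ioo_mem_nhdsLT hyx))
    fun _ ht => hf hy ht.1 ht.2.1.le

lemma le_of_tendsto_nhdsGT (hf : MonotoneOn f I) (hx : x ∈ I) (hI : I ∈ 𝓝[>] x)
    (h : Tendsto f (𝓝[>] x) (𝓝 L)) : f x ≤ L :=
  ge_of_tendsto h <| mem_of_superset (inter_mem hI self_mem_nhdsWithin)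
    fun _ ht => hf hx ht.1 (le_of_lt ht.2)

lemma le_of_tendsto_nhdsGT_of_lt (hf : MonotoneOn f I) (hy : y ∈ I) (hxy : x < y)
    (hI : I ∈ 𝓝[>] x) (h : Tendsto f (𝓝[>] x) (𝓝 L)) : L ≤ f y :=
  le_of_tendsto h <| mem_of_superset (inter_mem hI (Ioo_mem_nhdsGT hxy))
    fun _ ht => hf ht.1 hy ht.2.2.le

lemma tendsto_nhdsLT_mem_convexHull (hf : MonotoneOn f I) (hx : x ∈ I) (hI : I ∈ 𝓝[<] x)
    (h : Tendsto f (𝓝[<] x) (𝓝 L)) : L ∈ convexHull ℝ (f '' I) := by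
  obtain ⟨y, hy, hyx⟩ := Filter.nonempty_of_mem (inter_mem hI self_mem_nhdsWithin)
  exact (convex_convexHull ℝ _).ordConnected.out
    (subset_convexHull ℝ _ (mem_image_of_mem f hy))
    (subset_convexHull ℝ _ (mem_image_of_mem f hx))
    ⟨hf.le_of_tendsto_nhdsLT_of_lt hy hyx hI h, hf.le_of_tendsto_nhdsLT hx hI h⟩

lemma tendsto_nhdsGT_mem_convexHull (hf : MonotoneOn f I) (hx : x ∈ I) (hI : I ∈ 𝓝[>] x)
    (h : Tendsto f (𝓝[>] x) (𝓝 L)) : L ∈ convexHull ℝ (f '' I) := by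
  obtain ⟨y, hy, hxy⟩ := Filter.nonempty_of_mem (inter_mem hI self_mem_nhdsWithin)
  exact (convex_convexHull ℝ _).ordConnected.out
    (subset_convexHull ℝ _ (mem_image_of_mem f hx))
    (subset_convexHull ℝ _ (mem_image_of_mem f hy))
    ⟨hf.le_of_tendsto_nhdsGT hx hI h, hf.le_of_tendsto_nhdsGT_of_lt hy hxy hI h⟩

end MonotoneOn

namespace IsGenInv

variable {I : Set ℝ} {f g h finv : ℝ → ℝ} {n : ℕ} [NeZero n] {x : Fin n → ℝ}

lemma qam_mono (hinv : IsGenInv I f finv) (hg : ∀ i, g (x i) ∈ convexHull ℝ (f '' I))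
    (hh : ∀ i, h (x i) ∈ convexHull ℝ (f '' I)) (hgh : ∀ i, g (x i) ≤ h (x i)) :
    qam finv g n x ≤ qam finv h n x := by
  have hC := convex_convexHull ℝ (f '' I)
  refine hinv.1 (hC.sum_div_mem hg) (hC.sum_div_mem hh) ?_
  gcongr with i
  exact hgh i

lemma tendsto_qam (hinv : IsGenInv I f finv) {l : Filter (Fin n → ℝ)}
    (hg : ∀ i, g (x i) ∈ convexHull ℝ (f '' I))
    (hl : ∀ i, Tendsto (fun u => f (u i)) l (𝓝 (g (x i))))
    (hI : ∀ᶠ u in l, ∀ i, u i ∈ I) :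
    Tendsto (qam finv f n) l (𝓝 (qam finv g n x)) := by
  have hC := convex_convexHull ℝ (f '' I)
  refine (hinv.2.1 _ (hC.sum_div_mem hg)).tendsto.comp <| tendsto_nhdsWithin_iff.2 ⟨?_, ?_⟩
  · exact (tendsto_finsetSum _ fun i _ => hl i).div_const _
  · filter_upwards [hI] with u hu
    exact hC.sum_div_mem fun i => subset_convexHull ℝ _ (mem_image_of_mem f (hu i))

end IsGenInv

theorem stmt11_general (I : Set ℝ) (hIo : IsOpen I)
    (f fm fp finv : ℝ → ℝ) (hf : StrictMonoOn f I)
    (hfm : ∀ x ∈ I, Tendsto f (𝓝[<] x) (𝓝 (fm x)))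
    (hfp : ∀ x ∈ I, Tendsto f (𝓝[>] x) (𝓝 (fp x)))
    (hinv : IsGenInv I f finv)
    (n : ℕ) (x : Fin (n + 1) → ℝ) (hx : ∀ i, x i ∈ I) :
    Tendsto (qam finv f (n + 1)) (𝓝[Set.univ.pi fun i => Iio (x i)] x)
      (𝓝 (qam finv fm (n + 1) x)) ∧
    qam finv fm (n + 1) x ≤ qam finv f (n + 1) x ∧
    qam finv f (n + 1) x ≤ qam finv fp (n + 1) x ∧
    Tendsto (qam finv f (n + 1)) (𝓝[Set.univ.pi fun i => Ioi (x i)] x)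
      (𝓝 (qam finv fp (n + 1) x)) := by
  have hmono := hf.monotoneOn
  have hIl : ∀ i, I ∈ 𝓝[<] (x i) := fun i => mem_nhdsWithin_of_mem_nhds (hIo.mem_nhds (hx i))
  have hIr : ∀ i, I ∈ 𝓝[>] (x i) := fun i => mem_nhdsWithin_of_mem_nhds (hIo.mem_nhds (hx i))
  have hfm_mem i := hmono.tendsto_nhdsLT_mem_convexHull (hx i) (hIl i) (hfm _ (hx i))
  have hfp_mem i := hmono.tendsto_nhdsGT_mem_convexHull (hx i) (hIr i) (hfp _ (hx i))
  have hf_mem i : f (x i) ∈ convexHull ℝ (f '' I) :=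
    subset_convexHull ℝ _ (mem_image_of_mem f (hx i))
  have hl := tendsto_apply_nhdsWithin_univ_pi (fun i => Iio (x i)) x
  have hr := tendsto_apply_nhdsWithin_univ_pi (fun i => Ioi (x i)) x
  refine ⟨?_, ?_, ?_, ?_⟩
  · exact hinv.tendsto_qam hfm_mem (fun i => (hfm _ (hx i)).comp (hl i))
      (eventually_all.2 fun i => hl i (hIl i))
  · exact hinv.qam_mono hfm_mem hf_mem fun i =>
      hmono.le_of_tendsto_nhdsLT (hx i) (hIl i) (hfm _ (hx i))
  · exact hinv.qam_mono hf_mem hfp_mem fun i =>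
      hmono.le_of_tendsto_nhdsGT (hx i) (hIr i) (hfp _ (hx i))
  · exact hinv.tendsto_qam hfp_mem (fun i => (hfp _ (hx i)).comp (hr i))
      (eventually_all.2 fun i => hr i (hIr i))

/-- coordinatewise one-sided limits of `A_f^{[n]}` are `A_{f₋}^{[n]}` and
`A_{f₊}^{[n]}`, and `A_{f₋}^{[n]}(x) ≤ A_f^{[n]}(x) ≤ A_{f₊}^{[n]}(x)`.
(The generalized inverses of `f₋`, `f` and `f₊` coincide.) -/
theorem stmt11 (I : Set ℝ) (hIo : IsOpen I) (hIc : I.OrdConnected) (hne : I.Nonempty)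
    (f fm fp finv : ℝ → ℝ) (hf : StrictMonoOn f I)
    (hfm : ∀ x ∈ I, Tendsto f (𝓝[<] x) (𝓝 (fm x)))
    (hfp : ∀ x ∈ I, Tendsto f (𝓝[>] x) (𝓝 (fp x)))
    (hinv : IsGenInv I f finv)
    (n : ℕ) (x : Fin (n + 1) → ℝ) (hx : ∀ i, x i ∈ I) :
    Tendsto (qam finv f (n + 1)) (𝓝[Set.univ.pi fun i => Iio (x i)] x)
      (𝓝 (qam finv fm (n + 1) x)) ∧
    qam finv fm (n + 1) x ≤ qam finv f (n + 1) x ∧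
    qam finv f (n + 1) x ≤ qam finv fp (n + 1) x ∧
    Tendsto (qam finv f (n + 1)) (𝓝[Set.univ.pi fun i => Ioi (x i)] x)
      (𝓝 (qam finv fp (n + 1) x)) :=
  stmt11_general I hIo f fm fp finv hf hfm hfp hinv n x hx
end

section
/- Let f : I → ℝ be strictly increasing and n ∈ ℕ. Then A_{f₋}^{[n]} is subassociative: for all k ∈ {1,…,n−1} and x ∈ Iⁿ, A_{f₋}^{[n]}(x) ≥ A_{f₋}^{[n]}(y,…,y,x_{k+1},…,xₙ) where y := A_{f₋}^{[k]}(x₁,…,x_k). Dually, A_{f₊}^{[n]} is superassociative. -/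
open Set Filter Topology

/-!
The key inequality is `f₋ (f⁽⁻¹⁾ m) ≤ m` on `conv f(I)`: every `s ∈ I` left of `f⁽⁻¹⁾ m` has
`f s ≤ m`, as `f⁽⁻¹⁾` is monotone and inverts `f`. Applied to `m` the `f₋`-mean of `x₁, …, x_k`
and `y = f⁽⁻¹⁾ m`, it shows that replacing `x₁, …, x_k` by `y` does not increase `∑ f₋ (xᵢ)`, and
the monotone `f⁽⁻¹⁾` preserves this. Dually `m ≤ f₊ (f⁽⁻¹⁾ m)`.
-/

lemma Fin.sum_ite_lt_add_sum {M : Type*} [AddCommMonoid M] {n k : ℕ} (hkn : k ≤ n) (a : M)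
    (b : Fin n → M) :
    ∑ i : Fin n, (if (i : ℕ) < k then a else b i) + ∑ j : Fin k, b ⟨j, j.2.trans_le hkn⟩ =
      k • a + ∑ i, b i := by
  obtain ⟨m, rfl⟩ := Nat.exists_eq_add_of_le hkn
  simp [Fin.sum_univ_add, Fin.castAdd, Fin.natAdd, add_comm, add_left_comm]
  rfl

lemma Convex.sum_div_mem_s13 {C : Set ℝ} (hC : Convex ℝ C) {n : ℕ} (hn : 0 < n) {v : Fin n → ℝ}
    (hv : ∀ i, v i ∈ C) : (∑ i, v i) / n ∈ C := by
  have hn' : (n : ℝ) ≠ 0 := by positivity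
  simpa [Finset.mul_sum, div_eq_inv_mul, mul_inv_cancel₀ hn'] using
    hC.sum_mem (t := Finset.univ) (w := fun _ => (n : ℝ)⁻¹) (fun _ _ => by positivity)
      (by simp [mul_inv_cancel₀ hn']) (fun i _ => hv i)

section Limits

variable {I : Set ℝ} {f : ℝ → ℝ} {x L : ℝ}

lemma MonotoneOn.tendsto_nhdsLT_mem_Icc (hf : MonotoneOn f I) (hI : IsOpen I) (hx : x ∈ I)
    {t : ℝ} (ht : t ∈ I) (htx : t < x) (hL : Tendsto f (𝓝[<] x) (𝓝 L)) : L ∈ Icc (f t) (f x) := by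
  have hnear : ∀ᶠ s in 𝓝[<] x, s ∈ I ∧ t < s ∧ s < x :=
    (eventually_nhdsWithin_of_eventually_nhds (hI.eventually_mem hx)).and (Ioo_mem_nhdsLT htx)
  exact ⟨ge_of_tendsto hL (hnear.mono fun s hs => hf ht hs.1 hs.2.1.le),
    le_of_tendsto hL (hnear.mono fun s hs => hf hs.1 hx hs.2.2.le)⟩

lemma MonotoneOn.tendsto_nhdsGT_mem_Icc (hf : MonotoneOn f I) (hI : IsOpen I) (hx : x ∈ I)
    {t : ℝ} (ht : t ∈ I) (hxt : x < t) (hL : Tendsto f (𝓝[>] x) (𝓝 L)) : L ∈ Icc (f x) (f t) := by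
  have hnear : ∀ᶠ s in 𝓝[>] x, s ∈ I ∧ x < s ∧ s < t :=
    (eventually_nhdsWithin_of_eventually_nhds (hI.eventually_mem hx)).and (Ioo_mem_nhdsGT hxt)
  exact ⟨ge_of_tendsto hL (hnear.mono fun s hs => hf hx hs.1 hs.2.1.le),
    le_of_tendsto hL (hnear.mono fun s hs => hf hs.1 ht hs.2.2.le)⟩

lemma leftLim_mem_convexHull (hf : MonotoneOn f I) (hI : IsOpen I) (hx : x ∈ I)
    (hL : Tendsto f (𝓝[<] x) (𝓝 L)) : L ∈ convexHull ℝ (f '' I) := by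
  obtain ⟨t, htx, ht⟩ := (hI.eventually_mem hx).exists_lt
  exact (convex_convexHull ℝ _).ordConnected.out (subset_convexHull ℝ _ (mem_image_of_mem f ht))
    (subset_convexHull ℝ _ (mem_image_of_mem f hx)) (hf.tendsto_nhdsLT_mem_Icc hI hx ht htx hL)

lemma rightLim_mem_convexHull (hf : MonotoneOn f I) (hI : IsOpen I) (hx : x ∈ I)
    (hL : Tendsto f (𝓝[>] x) (𝓝 L)) : L ∈ convexHull ℝ (f '' I) := by
  obtain ⟨t, hxt, ht⟩ := (hI.eventually_mem hx).exists_gt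
  exact (convex_convexHull ℝ _).ordConnected.out (subset_convexHull ℝ _ (mem_image_of_mem f hx))
    (subset_convexHull ℝ _ (mem_image_of_mem f ht)) (hf.tendsto_nhdsGT_mem_Icc hI hx ht hxt hL)

end Limits

namespace IsGenInv

variable {I : Set ℝ} {f finv : ℝ → ℝ} {m : ℝ}

lemma apply_le_of_lt (h : IsGenInv I f finv) (hm : m ∈ convexHull ℝ (f '' I)) {s : ℝ}
    (hs : s ∈ I) (hsm : s < finv m) : f s ≤ m := by
  by_contra! hlt
  have := h.1 hm (subset_convexHull ℝ _ (mem_image_of_mem f hs)) hlt.le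
  rw [h.2.2.2 s hs] at this
  exact this.not_gt hsm

lemma le_apply_of_lt (h : IsGenInv I f finv) (hm : m ∈ convexHull ℝ (f '' I)) {s : ℝ}
    (hs : s ∈ I) (hms : finv m < s) : m ≤ f s := by
  by_contra! hlt
  have := h.1 (subset_convexHull ℝ _ (mem_image_of_mem f hs)) hm hlt.le
  rw [h.2.2.2 s hs] at this
  exact this.not_gt hms

lemma leftLim_apply_le (h : IsGenInv I f finv) (hI : IsOpen I) {fm : ℝ → ℝ}
    (hfm : ∀ x ∈ I, Tendsto f (𝓝[<] x) (𝓝 (fm x))) (hm : m ∈ convexHull ℝ (f '' I)) :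
    fm (finv m) ≤ m := by
  have hy : finv m ∈ I := h.2.2.1 hm
  refine le_of_tendsto (hfm _ hy) ?_
  filter_upwards [eventually_nhdsWithin_of_eventually_nhds (hI.eventually_mem hy),
    self_mem_nhdsWithin] with s hs hsy using h.apply_le_of_lt hm hs hsy

lemma le_rightLim_apply (h : IsGenInv I f finv) (hI : IsOpen I) {fp : ℝ → ℝ}
    (hfp : ∀ x ∈ I, Tendsto f (𝓝[>] x) (𝓝 (fp x))) (hm : m ∈ convexHull ℝ (f '' I)) :
    m ≤ fp (finv m) := by
  have hy : finv m ∈ I := h.2.2.1 hm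
  refine ge_of_tendsto (hfp _ hy) ?_
  filter_upwards [eventually_nhdsWithin_of_eventually_nhds (hI.eventually_mem hy),
    self_mem_nhdsWithin] with s hs hys using h.le_apply_of_lt hm hs hys

end IsGenInv

section Prefix

variable {I C : Set ℝ} {g finv : ℝ → ℝ} {n k : ℕ}

lemma qam_prefix_le (hC : Convex ℝ C) (hg : MapsTo g I C) (hmono : MonotoneOn finv C)
    (hmaps : MapsTo finv C I) (hgfinv : ∀ m ∈ C, g (finv m) ≤ m) (hk : 0 < k) (hkn : k < n)
    (x : Fin n → ℝ) (hx : ∀ i, x i ∈ I) :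
    qam finv g n (fun i => if (i : ℕ) < k then qam finv g k (fun j => x ⟨j.1, j.2.trans hkn⟩)
      else x i) ≤ qam finv g n x := by
  set y := qam finv g k (fun j => x ⟨j.1, j.2.trans hkn⟩)
  have hmean : (∑ j : Fin k, g (x ⟨j.1, j.2.trans hkn⟩)) / k ∈ C :=
    hC.sum_div_mem_s13 hk fun j => hg (hx _)
  have hy : y ∈ I := hmaps hmean
  have hgy : k * g y ≤ ∑ j : Fin k, g (x ⟨j.1, j.2.trans hkn⟩) :=
    (le_div_iff₀' (by positivity)).1 (by exact hgfinv _ hmean)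
  have hsum := Fin.sum_ite_lt_add_sum hkn.le (g y) (fun i => g (x i))
  simp only [nsmul_eq_mul] at hsum
  refine hmono (hC.sum_div_mem_s13 (hk.trans hkn) fun i => ?_)
    (hC.sum_div_mem_s13 (hk.trans hkn) fun i => hg (hx i)) ?_
  · dsimp only
    split_ifs
    exacts [hg hy, hg (hx i)]
  · simp only [apply_ite g]
    exact div_le_div_of_nonneg_right (by linarith) (by positivity)

lemma qam_prefix_ge (hC : Convex ℝ C) (hg : MapsTo g I C) (hmono : MonotoneOn finv C)
    (hmaps : MapsTo finv C I) (hgfinv : ∀ m ∈ C, m ≤ g (finv m)) (hk : 0 < k) (hkn : k < n)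
    (x : Fin n → ℝ) (hx : ∀ i, x i ∈ I) :
    qam finv g n x ≤ qam finv g n
      (fun i => if (i : ℕ) < k then qam finv g k (fun j => x ⟨j.1, j.2.trans hkn⟩) else x i) := by
  set y := qam finv g k (fun j => x ⟨j.1, j.2.trans hkn⟩)
  have hmean : (∑ j : Fin k, g (x ⟨j.1, j.2.trans hkn⟩)) / k ∈ C :=
    hC.sum_div_mem_s13 hk fun j => hg (hx _)
  have hy : y ∈ I := hmaps hmean
  have hgy : ∑ j : Fin k, g (x ⟨j.1, j.2.trans hkn⟩) ≤ k * g y :=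
    (div_le_iff₀' (by positivity)).1 (by exact hgfinv _ hmean)
  have hsum := Fin.sum_ite_lt_add_sum hkn.le (g y) (fun i => g (x i))
  simp only [nsmul_eq_mul] at hsum
  refine hmono (hC.sum_div_mem_s13 (hk.trans hkn) fun i => hg (hx i))
    (hC.sum_div_mem_s13 (hk.trans hkn) fun i => ?_) ?_
  · dsimp only
    split_ifs
    exacts [hg hy, hg (hx i)]
  · simp only [apply_ite g]
    exact div_le_div_of_nonneg_right (by linarith) (by positivity)

end Prefix

theorem stmt13_general (I : Set ℝ) (hIo : IsOpen I)
    (f fm fp finv : ℝ → ℝ) (hf : StrictMonoOn f I)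
    (hfm : ∀ x ∈ I, Tendsto f (𝓝[<] x) (𝓝 (fm x)))
    (hfp : ∀ x ∈ I, Tendsto f (𝓝[>] x) (𝓝 (fp x)))
    (hinv : IsGenInv I f finv)
    (n k : ℕ) (hk : 0 < k) (hkn : k < n) (x : Fin n → ℝ) (hx : ∀ i, x i ∈ I) :
    qam finv fm n
        (fun i => if (i : ℕ) < k then qam finv fm k (fun j => x ⟨j.1, j.2.trans hkn⟩)
          else x i)
      ≤ qam finv fm n x ∧
    qam finv fp n x ≤
      qam finv fp n
        (fun i => if (i : ℕ) < k then qam finv fp k (fun j => x ⟨j.1, j.2.trans hkn⟩)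
          else x i) :=
  ⟨qam_prefix_le (convex_convexHull ℝ _)
      (fun _ hz => leftLim_mem_convexHull hf.monotoneOn hIo hz (hfm _ hz)) hinv.1 hinv.2.2.1
      (fun _ hm => hinv.leftLim_apply_le hIo hfm hm) hk hkn x hx,
    qam_prefix_ge (convex_convexHull ℝ _)
      (fun _ hz => rightLim_mem_convexHull hf.monotoneOn hIo hz (hfp _ hz)) hinv.1 hinv.2.2.1
      (fun _ hm => hinv.le_rightLim_apply hIo hfp hm) hk hkn x hx⟩

/-- `A_{f₋}^{[n]}` is subassociative and `A_{f₊}^{[n]}` is superassociative. -/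
theorem stmt13 (I : Set ℝ) (hIo : IsOpen I) (hIc : I.OrdConnected) (hne : I.Nonempty)
    (f fm fp finv : ℝ → ℝ) (hf : StrictMonoOn f I)
    (hfm : ∀ x ∈ I, Tendsto f (𝓝[<] x) (𝓝 (fm x)))
    (hfp : ∀ x ∈ I, Tendsto f (𝓝[>] x) (𝓝 (fp x)))
    (hinv : IsGenInv I f finv)
    (n k : ℕ) (hk : 0 < k) (hkn : k < n) (x : Fin n → ℝ) (hx : ∀ i, x i ∈ I) :
    qam finv fm n
        (fun i => if (i : ℕ) < k then qam finv fm k (fun j => x ⟨j.1, j.2.trans hkn⟩)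
          else x i)
      ≤ qam finv fm n x ∧
    qam finv fp n x ≤
      qam finv fp n
        (fun i => if (i : ℕ) < k then qam finv fp k (fun j => x ⟨j.1, j.2.trans hkn⟩)
          else x i) :=
  stmt13_general I hIo f fm fp finv hf hfm hfp hinv n k hk hkn x hx
end

section
/- Let f : I → ℝ be strictly increasing and m < n in ℕ. Then for all x ∈ Iᵐ, A_f^{[m]}(x₁,…,x_m) = inf{z ∈ I : A_f^{[n]}(x₁,…,x_m,z,…,z) < z} = sup{z ∈ I : A_f^{[n]}(x₁,…,x_m,z,…,z) > z}, where z appears n−m times. -/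
open Set Filter Topology

/-!
Write `c = (∑ f xᵢ) / m`, so that `A_f^{[m]}(x) = f⁽⁻¹⁾ c`, and `t z = (∑ f xᵢ + (n - m) f z) / n`,
so that the padded `n`-variable mean is `f⁽⁻¹⁾ (t z)`. As `t z` lies strictly between `c` and
`f z`, monotonicity of `f⁽⁻¹⁾` gives `A_f^{[n]}(x, z, …, z) ≥ z` for `z < f⁽⁻¹⁾ c` and `≤ z` for
`z > f⁽⁻¹⁾ c`. The generalized inverse may be constant on the gaps of `f '' I`, so strictness is
only obtained at points `z` where `f` is continuous: there `t z < f z'` for some `z' < z` (or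
symmetrically), whence `f⁽⁻¹⁾ (t z) ≤ z' < z`. Such points are dense, since a monotone function
has only countably many discontinuities, so the infimum and supremum are both `f⁽⁻¹⁾ c`.
-/

theorem Fin.sum_apply_dite_lt_eq {α β : Type*} [AddCommMonoid β] (φ : α → β) {m n : ℕ}
    (hmn : m ≤ n) (x : Fin m → α) (z : α) :
    ∑ i : Fin n, φ (if h : (i : ℕ) < m then x ⟨i, h⟩ else z) =
      ∑ i, φ (x i) + (n - m) • φ z := by
  obtain ⟨k, rfl⟩ := Nat.exists_eq_add_of_le hmn
  simp [Fin.sum_univ_add]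

theorem sum_div_mem_convexHull {s : Set ℝ} {n : ℕ} (hn : 0 < n) {y : Fin n → ℝ}
    (hy : ∀ i, y i ∈ s) : (∑ i, y i) / n ∈ convexHull ℝ s := by
  have := (convex_convexHull ℝ s).sum_mem (t := Finset.univ) (w := fun _ => (n : ℝ)⁻¹)
    (z := y) (fun _ _ => by positivity) (by simp [hn.ne'])
    (fun i _ => subset_convexHull ℝ s (hy i))
  simpa [← Finset.mul_sum, div_eq_inv_mul] using this

theorem MonotoneOn.exists_continuousAt_of_isOpen {f : ℝ → ℝ} {s : Set ℝ}
    (hf : MonotoneOn f s) (hs : IsOpen s) (hne : s.Nonempty) : ∃ z ∈ s, ContinuousAt f z := by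
  obtain ⟨z, hzs, hz⟩ :=
    (hf.countable_not_continuousWithinAt.dense_compl ℝ).inter_open_nonempty s hs hne
  have : ContinuousWithinAt f s z := by simpa [hzs] using hz
  exact ⟨z, hzs, (continuousWithinAt_iff_continuousAt (hs.mem_nhds hzs)).1 this⟩

theorem add_sub_mul_div_lt_iff {S a m n : ℝ} (hm : 0 < m) (hmn : m < n) :
    (S + (n - m) * a) / n < a ↔ S / m < a := by
  rw [div_lt_iff₀ (hm.trans hmn), div_lt_iff₀ hm]
  constructor <;> intro <;> linarith

theorem lt_add_sub_mul_div_iff {S a m n : ℝ} (hm : 0 < m) (hmn : m < n) :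
    a < (S + (n - m) * a) / n ↔ a < S / m := by
  rw [lt_div_iff₀ (hm.trans hmn), lt_div_iff₀ hm]
  constructor <;> intro <;> linarith

section LeftInverse

variable {I C : Set ℝ} {f g : ℝ → ℝ}

theorem MonotoneOn.lt_of_leftInvOn_of_continuousWithinAt_Iio (hg : MonotoneOn g C)
    (hgf : LeftInvOn g f I) (hfC : MapsTo f I C) {u w : ℝ} (hI : I ∈ 𝓝[<] w)
    (hfw : ContinuousWithinAt f (Iio w) w) (hu : u ∈ C) (huw : u < f w) : g u < w := by
  obtain ⟨z, ⟨hzI, huz⟩, hzw⟩ :=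
    (((eventually_mem_set.2 hI).and (hfw.eventually (eventually_gt_nhds huw))).and
      eventually_mem_nhdsWithin).exists
  calc g u ≤ g (f z) := hg hu (hfC hzI) huz.le
    _ = z := hgf hzI
    _ < w := hzw

theorem MonotoneOn.lt_of_leftInvOn_of_continuousWithinAt_Ioi (hg : MonotoneOn g C)
    (hgf : LeftInvOn g f I) (hfC : MapsTo f I C) {u w : ℝ} (hI : I ∈ 𝓝[>] w)
    (hfw : ContinuousWithinAt f (Ioi w) w) (hu : u ∈ C) (hwu : f w < u) : w < g u := by
  obtain ⟨z, ⟨hzI, hzu⟩, hwz⟩ :=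
    (((eventually_mem_set.2 hI).and (hfw.eventually (eventually_lt_nhds hwu))).and
      eventually_mem_nhdsWithin).exists
  calc w < z := hwz
    _ = g (f z) := (hgf hzI).symm
    _ ≤ g u := hg (hfC hzI) hu hzu.le

variable {t : ℝ → ℝ} {c : ℝ}

theorem csInf_setOf_apply_lt_eq (hI : IsOpen I) (hf : MonotoneOn f I) (hg : MonotoneOn g C)
    (hgf : LeftInvOn g f I) (hfC : MapsTo f I C) (hc : c ∈ C) (hcI : g c ∈ I)
    (htC : ∀ z ∈ I, t z ∈ C) (hlt : ∀ z ∈ I, c < f z → t z < f z)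
    (hgt : ∀ z ∈ I, f z < c → f z < t z) :
    sInf {z | z ∈ I ∧ g (t z) < z} = g c := by
  have approx : ∀ w, g c < w → ∃ z ∈ {z | z ∈ I ∧ g (t z) < z}, z < w := by
    intro w hw
    have hne : (Ioo (g c) w ∩ I).Nonempty := nonempty_of_mem <|
      inter_mem (Ioo_mem_nhdsGT hw) (mem_nhdsWithin_of_mem_nhds (hI.mem_nhds hcI))
    obtain ⟨z, ⟨hz, hzI⟩, hfz⟩ :=
      (hf.mono inter_subset_right).exists_continuousAt_of_isOpen (isOpen_Ioo.inter hI) hne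
    have hcz : c < f z := hg.reflect_lt hc (hfC hzI) (by rw [hgf hzI]; exact hz.1)
    refine ⟨z, ⟨hzI, ?_⟩, hz.2⟩
    exact hg.lt_of_leftInvOn_of_continuousWithinAt_Iio hgf hfC (mem_nhdsWithin_of_mem_nhds
      (hI.mem_nhds hzI)) hfz.continuousWithinAt (htC z hzI) (hlt z hzI hcz)
  refine csInf_eq_of_forall_ge_of_forall_gt_exists_lt ?_ ?_ approx
  · obtain ⟨z, hz, -⟩ := approx (g c + 1) (lt_add_one _)
    exact ⟨z, hz⟩
  · rintro z ⟨hzI, hz⟩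
    by_contra! hzc
    have hfz : f z < c := hg.reflect_lt (hfC hzI) hc (by rwa [hgf hzI])
    have hzt := hg (hfC hzI) (htC z hzI) (hgt z hzI hfz).le
    rw [hgf hzI] at hzt
    exact hzt.not_gt hz

theorem csSup_setOf_lt_apply_eq (hI : IsOpen I) (hf : MonotoneOn f I) (hg : MonotoneOn g C)
    (hgf : LeftInvOn g f I) (hfC : MapsTo f I C) (hc : c ∈ C) (hcI : g c ∈ I)
    (htC : ∀ z ∈ I, t z ∈ C) (hlt : ∀ z ∈ I, c < f z → t z < f z)
    (hgt : ∀ z ∈ I, f z < c → f z < t z) :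
    sSup {z | z ∈ I ∧ z < g (t z)} = g c := by
  have approx : ∀ w, w < g c → ∃ z ∈ {z | z ∈ I ∧ z < g (t z)}, w < z := by
    intro w hw
    have hne : (Ioo w (g c) ∩ I).Nonempty := nonempty_of_mem <|
      inter_mem (Ioo_mem_nhdsLT hw) (mem_nhdsWithin_of_mem_nhds (hI.mem_nhds hcI))
    obtain ⟨z, ⟨hz, hzI⟩, hfz⟩ :=
      (hf.mono inter_subset_right).exists_continuousAt_of_isOpen (isOpen_Ioo.inter hI) hne
    have hzc : f z < c := hg.reflect_lt (hfC hzI) hc (by rw [hgf hzI]; exact hz.2)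
    refine ⟨z, ⟨hzI, ?_⟩, hz.1⟩
    exact hg.lt_of_leftInvOn_of_continuousWithinAt_Ioi hgf hfC (mem_nhdsWithin_of_mem_nhds
      (hI.mem_nhds hzI)) hfz.continuousWithinAt (htC z hzI) (hgt z hzI hzc)
  refine csSup_eq_of_forall_le_of_forall_lt_exists_gt ?_ ?_ approx
  · obtain ⟨z, hz, -⟩ := approx (g c - 1) (sub_one_lt _)
    exact ⟨z, hz⟩
  · rintro z ⟨hzI, hz⟩
    by_contra! hcz
    have hfz : c < f z := hg.reflect_lt hc (hfC hzI) (by rwa [hgf hzI])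
    have htz := hg (htC z hzI) (hfC hzI) (hlt z hzI hfz).le
    rw [hgf hzI] at htz
    exact htz.not_gt hz

end LeftInverse

theorem stmt14_general (I : Set ℝ) (hIo : IsOpen I)
    (f finv : ℝ → ℝ) (hf : StrictMonoOn f I) (hinv : IsGenInv I f finv)
    (m n : ℕ) (hm : 0 < m) (hmn : m < n) (x : Fin m → ℝ) (hx : ∀ i, x i ∈ I) :
    qam finv f m x =
      sInf {z | z ∈ I ∧
        qam finv f n (fun i => if h : (i : ℕ) < m then x ⟨i.1, h⟩ else z) < z} ∧
    qam finv f m x =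
      sSup {z | z ∈ I ∧
        z < qam finv f n (fun i => if h : (i : ℕ) < m then x ⟨i.1, h⟩ else z)} := by
  obtain ⟨hg, -, hgC, hgf⟩ := hinv
  set y : ℝ → Fin n → ℝ := fun z i => if h : (i : ℕ) < m then x ⟨i.1, h⟩ else z
  have hmr : (0 : ℝ) < m := Nat.cast_pos.2 hm
  have hmnr : (m : ℝ) < n := Nat.cast_lt.2 hmn
  have hfC : MapsTo f I (convexHull ℝ (f '' I)) :=
    fun z hz => subset_convexHull ℝ _ (mem_image_of_mem f hz)
  have hc := sum_div_mem_convexHull hm fun i => mem_image_of_mem f (hx i)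
  have htC (z : ℝ) (hz : z ∈ I) : (∑ i, f (y z i)) / n ∈ convexHull ℝ (f '' I) := by
    refine sum_div_mem_convexHull (hm.trans hmn) fun i => mem_image_of_mem f ?_
    unfold y
    split_ifs
    exacts [hx _, hz]
  have hsum (z : ℝ) : ∑ i, f (y z i) = ∑ i, f (x i) + ((n : ℝ) - m) * f z := by
    rw [Fin.sum_apply_dite_lt_eq f hmn.le, nsmul_eq_mul, Nat.cast_sub hmn.le]
  have hlt (z : ℝ) (_ : z ∈ I) (h : (∑ i, f (x i)) / m < f z) :
      (∑ i, f (y z i)) / n < f z := by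
    rw [hsum]
    exact (add_sub_mul_div_lt_iff hmr hmnr).2 h
  have hgt (z : ℝ) (_ : z ∈ I) (h : f z < (∑ i, f (x i)) / m) :
      f z < (∑ i, f (y z i)) / n := by
    rw [hsum]
    exact (lt_add_sub_mul_div_iff hmr hmnr).2 h
  exact ⟨(csInf_setOf_apply_lt_eq hIo hf.monotoneOn hg hgf hfC hc (hgC hc) htC hlt hgt).symm,
    (csSup_setOf_lt_apply_eq hIo hf.monotoneOn hg hgf hfC hc (hgC hc) htC hlt hgt).symm⟩

/-- for `m < n`, the `m`-variable mean is determined by the `n`-variable one: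
`A_f^{[m]}(x) = inf {z ∈ I : A_f^{[n]}(x₁,…,x_m,z,…,z) < z}
             = sup {z ∈ I : A_f^{[n]}(x₁,…,x_m,z,…,z) > z}`. -/
theorem stmt14 (I : Set ℝ) (hIo : IsOpen I) (hIc : I.OrdConnected) (hne : I.Nonempty)
    (f finv : ℝ → ℝ) (hf : StrictMonoOn f I) (hinv : IsGenInv I f finv)
    (m n : ℕ) (hm : 0 < m) (hmn : m < n) (x : Fin m → ℝ) (hx : ∀ i, x i ∈ I) :
    qam finv f m x =
      sInf {z | z ∈ I ∧
        qam finv f n (fun i => if h : (i : ℕ) < m then x ⟨i.1, h⟩ else z) < z} ∧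
    qam finv f m x =
      sSup {z | z ∈ I ∧
        z < qam finv f n (fun i => if h : (i : ℕ) < m then x ⟨i.1, h⟩ else z)} :=
  stmt14_general I hIo f finv hf hinv m n hm hmn x hx
end

section
/- Let f, g : I → ℝ be strictly increasing and m < n in ℕ. If A_f^{[n]}(x) ≤ A_g^{[n]}(x) for all x ∈ Iⁿ, then A_f^{[m]}(y) ≤ A_g^{[m]}(y) for all y ∈ Iᵐ. -/
/-!
Suppose `a := A_f^{[m]}(y) > b := A_g^{[m]}(y)`, and let `μ` be the mean of the `g(yᵢ)` and
`r := (n-m)/n < 1`. Pad `y` with `n - m` copies of a point `t' ∈ (b, a]`. The `f`-argument of the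
padded `n`-mean lies between the `f`-argument of `a` and `f(t')`, so the padded `f`-mean is at least
`min a t' = t'`; hence so is the padded `g`-mean `g⁽⁻¹⁾((1-r)μ + r g(t'))`. This gives
`g(t) - μ ≤ r (g(t') - μ)` whenever `b < t < t' ≤ a`. Iterating along points between `t` and `a`
yields `g(t) - μ ≤ rᵏ (g(a) - μ)` for all `k`, so `g(t) ≤ μ`, while `t > b` forces `g(t) > μ`.
-/

open Set Filter Topology

lemma nonpos_of_le_mul_of_lt_one {G : ℝ → ℝ} {a b r : ℝ} (hr0 : 0 ≤ r) (hr1 : r < 1)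
    (hG : ∀ t t', b < t → t < t' → t' ≤ a → G t ≤ r * G t') {t : ℝ} (hbt : b < t) (hta : t < a) :
    G t ≤ 0 := by
  have hiter : ∀ k : ℕ, ∀ t, b < t → t < a → G t ≤ r ^ (k + 1) * G a := by
    intro k
    induction k with
    | zero => simpa using fun t hbt hta => hG t a hbt hta le_rfl
    | succ k ih =>
      intro t hbt hta
      calc G t ≤ r * G ((t + a) / 2) := hG t _ hbt (by linarith) (by linarith)
        _ ≤ r * (r ^ (k + 1) * G a) :=
          mul_le_mul_of_nonneg_left (ih _ (by linarith) (by linarith)) hr0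
        _ = r ^ (k + 1 + 1) * G a := by ring
  have hlim : Tendsto (fun k : ℕ => r ^ (k + 1) * G a) atTop (𝓝 0) := by
    simpa using ((tendsto_pow_atTop_nhds_zero_of_lt_one hr0 hr1).comp
      (tendsto_add_atTop_nat 1)).mul_const (G a)
  exact ge_of_tendsto' hlim fun k => hiter k t hbt hta

lemma MonotoneOn.min_le_of_mem_segment {s : Set ℝ} {φ : ℝ → ℝ} (hφ : MonotoneOn φ s)
    {p q z : ℝ} (hp : p ∈ s) (hq : q ∈ s) (hz : z ∈ s) (hzpq : z ∈ segment ℝ p q) :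
    min (φ p) (φ q) ≤ φ z := by
  rw [segment_eq_uIcc] at hzpq
  rcases le_total p q with hpq | hqp
  · exact min_le_of_left_le (hφ hp hz (by simpa [hpq] using hzpq.1))
  · exact min_le_of_right_le (hφ hq hz (by simpa [hqp] using hzpq.1))

lemma mean_mem_convexHull {I : Set ℝ} (f : ℝ → ℝ) {m : ℕ} (hm : 0 < m) {y : Fin m → ℝ}
    (hy : ∀ i, y i ∈ I) : (∑ i, f (y i)) / m ∈ convexHull ℝ (f '' I) := by
  have h := Finset.univ.centerMass_mem_convexHull (w := fun _ : Fin m => (1 : ℝ))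
    (fun _ _ => zero_le_one) (by simpa using hm) (z := fun i => f (y i))
    (fun i _ => mem_image_of_mem f (hy i))
  simpa [Finset.centerMass, div_eq_inv_mul] using h

lemma qam_append_const (finv f : ℝ → ℝ) {m : ℕ} (hm : 0 < m) (k : ℕ) (y : Fin m → ℝ) (t : ℝ) :
    qam finv f (m + k) (Fin.append y fun _ => t) =
      finv (AffineMap.lineMap ((∑ i, f (y i)) / m) (f t) (k / (m + k : ℝ))) := by
  have hm' : (m : ℝ) ≠ 0 := by positivity
  have hmk : (m + k : ℝ) ≠ 0 := by positivity
  simp only [qam, Fin.sum_univ_add, Fin.append_left, Fin.append_right, Finset.sum_const,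
    Finset.card_univ, Fintype.card_fin, nsmul_eq_mul, Nat.cast_add, AffineMap.lineMap_apply_ring']
  congr 1
  field_simp
  ring

lemma mem_convexHull_of_mem_segment {I : Set ℝ} {f : ℝ → ℝ} {p t z : ℝ}
    (hp : p ∈ convexHull ℝ (f '' I)) (ht : t ∈ I) (hz : z ∈ segment ℝ p (f t)) :
    z ∈ convexHull ℝ (f '' I) :=
  (convex_convexHull ℝ _).segment_subset hp (subset_convexHull ℝ _ (mem_image_of_mem f ht)) hz

namespace IsGenInv

variable {I : Set ℝ} {f finv : ℝ → ℝ}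

lemma le_apply_of_mem_segment (h : IsGenInv I f finv) {p z t : ℝ}
    (hp : p ∈ convexHull ℝ (f '' I)) (ht : t ∈ I) (htp : t ≤ finv p)
    (hz : z ∈ segment ℝ p (f t)) : t ≤ finv z := by
  have hmin := h.1.min_le_of_mem_segment hp (subset_convexHull ℝ _ (mem_image_of_mem f ht))
    (mem_convexHull_of_mem_segment hp ht hz) hz
  rwa [h.2.2.2 t ht, min_eq_right htp] at hmin

lemma lt_of_lt_apply (h : IsGenInv I f finv) {t z : ℝ} (ht : t ∈ I)
    (hz : z ∈ convexHull ℝ (f '' I)) (htz : t < finv z) : f t < z :=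
  h.1.reflect_lt (subset_convexHull ℝ _ (mem_image_of_mem f ht)) hz (by rwa [h.2.2.2 t ht])

lemma lt_of_apply_lt (h : IsGenInv I f finv) {t z : ℝ} (ht : t ∈ I)
    (hz : z ∈ convexHull ℝ (f '' I)) (hzt : finv z < t) : z < f t :=
  h.1.reflect_lt hz (subset_convexHull ℝ _ (mem_image_of_mem f ht)) (by rwa [h.2.2.2 t ht])

end IsGenInv

lemma sub_le_mul_sub_of_forall_qam_le {I : Set ℝ} {f g finvf finvg : ℝ → ℝ}
    (hinvf : IsGenInv I f finvf) (hinvg : IsGenInv I g finvg) {m k : ℕ} (hm : 0 < m)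
    (hcomp : ∀ x : Fin (m + k) → ℝ, (∀ i, x i ∈ I) →
      qam finvf f (m + k) x ≤ qam finvg g (m + k) x)
    {y : Fin m → ℝ} (hy : ∀ i, y i ∈ I) {t t' : ℝ} (ht : t ∈ I) (ht' : t' ∈ I) (htt' : t < t')
    (ht'y : t' ≤ qam finvf f m y) :
    g t - (∑ i, g (y i)) / m ≤ k / (m + k : ℝ) * (g t' - (∑ i, g (y i)) / m) := by
  have hr : k / (m + k : ℝ) ∈ Icc 0 1 :=
    ⟨by positivity, div_le_one_of_le₀ (le_add_of_nonneg_left m.cast_nonneg) (by positivity)⟩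
  have hμf := mean_mem_convexHull f hm hy
  have hμg := mean_mem_convexHull g hm hy
  have hpad := hcomp (Fin.append y fun _ => t')
    (Fin.addCases (fun i => by simpa using hy i) fun _ => by simpa using ht')
  rw [qam_append_const _ _ hm, qam_append_const _ _ hm] at hpad
  have hseg := lineMap_mem_segment ℝ ((∑ i, g (y i)) / m) (g t') hr
  have hlt := hinvg.lt_of_lt_apply ht (mem_convexHull_of_mem_segment hμg ht' hseg)
    (htt'.trans_le ((hinvf.le_apply_of_mem_segment hμf ht' ht'y
      (lineMap_mem_segment ℝ _ _ hr)).trans hpad))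
  rw [AffineMap.lineMap_apply_ring'] at hlt
  linarith

theorem stmt15_general (I : Set ℝ) (hIc : I.OrdConnected)
    (f g finvf finvg : ℝ → ℝ)
    (hinvf : IsGenInv I f finvf) (hinvg : IsGenInv I g finvg)
    (m n : ℕ) (hm : 0 < m) (hmn : m < n)
    (hcomp : ∀ x : Fin n → ℝ, (∀ i, x i ∈ I) → qam finvf f n x ≤ qam finvg g n x) :
    ∀ y : Fin m → ℝ, (∀ i, y i ∈ I) → qam finvf f m y ≤ qam finvg g m y := by
  intro y hy
  obtain ⟨k, rfl⟩ := Nat.exists_eq_add_of_le hmn.le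
  have hr1 : k / (m + k : ℝ) < 1 :=
    (div_lt_one (by positivity)).2 (by linarith [(Nat.cast_pos.2 hm : (0 : ℝ) < m)])
  by_contra! hba
  have hbaI : Icc (qam finvg g m y) (qam finvf f m y) ⊆ I :=
    hIc.out (hinvg.2.2.1 (mean_mem_convexHull g hm hy)) (hinvf.2.2.1 (mean_mem_convexHull f hm hy))
  obtain ⟨t, hbt, hta⟩ := exists_between hba
  have hpos := hinvg.lt_of_apply_lt (hbaI ⟨hbt.le, hta.le⟩) (mean_mem_convexHull g hm hy) hbt
  have hnonpos := nonpos_of_le_mul_of_lt_one (by positivity) hr1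
    (fun t t' hbt htt' ht'a => sub_le_mul_sub_of_forall_qam_le hinvf hinvg hm hcomp hy
      (hbaI ⟨hbt.le, htt'.le.trans ht'a⟩) (hbaI ⟨hbt.le.trans htt'.le, ht'a⟩) htt' ht'a) hbt hta
  linarith

/-- comparison of `n`-variable generalized quasiarithmetic means implies the
comparison of the `m`-variable ones for `m < n`. -/
theorem stmt15 (I : Set ℝ) (hIo : IsOpen I) (hIc : I.OrdConnected) (hne : I.Nonempty)
    (f g finvf finvg : ℝ → ℝ) (hf : StrictMonoOn f I) (hg : StrictMonoOn g I)
    (hinvf : IsGenInv I f finvf) (hinvg : IsGenInv I g finvg)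
    (m n : ℕ) (hm : 0 < m) (hmn : m < n)
    (hcomp : ∀ x : Fin n → ℝ, (∀ i, x i ∈ I) → qam finvf f n x ≤ qam finvg g n x) :
    ∀ y : Fin m → ℝ, (∀ i, y i ∈ I) → qam finvf f m y ≤ qam finvg g m y :=
  stmt15_general I hIc f g finvf finvg hinvf hinvg m n hm hmn hcomp
end

section
/- Let f, g : I → ℝ be strictly increasing, n ≥ 2, and suppose A_f^{[n]}(x) ≤ A_g^{[n]}(x) for all x ∈ Iⁿ. Then for all m ∈ {1,…,n}, all x < y in I, and all t ∈ (x,y) at which both f and g are continuous, ⌊m·(f(y)−f(t))/(f(y)−f(x))⌋ ≤ ⌊m·(g(y)−g(t))/(g(y)−g(x))⌋. -/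
open Finset
lemma sum_pw (n k m : ℕ) (hkm : k ≤ m) (hmn : m ≤ n) (a b c : ℝ) :
    ∑ i : Fin n, (if (i:ℕ) < k then a else if (i:ℕ) < m then b else c)
      = k * a + ((m:ℝ) - k) * b + ((n:ℝ) - m) * c := by
  rw [Fin.sum_univ_eq_sum_range (fun i => if i < k then a else if i < m then b else c) n,
    Finset.range_eq_Ico,
    ← Finset.sum_Ico_consecutive _ (Nat.zero_le m) hmn,
    ← Finset.sum_Ico_consecutive _ (Nat.zero_le k) hkm]
  have h1 : ∑ i ∈ Finset.Ico 0 k, (if i < k then a else if i < m then b else c) = k * a := by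
    rw [Finset.sum_congr rfl (fun i hi => by
      rw [if_pos (Finset.mem_Ico.mp hi).2]), Finset.sum_const, Nat.card_Ico, Nat.sub_zero,
      nsmul_eq_mul]
  have h2 : ∑ i ∈ Finset.Ico k m, (if i < k then a else if i < m then b else c) = (m - k) * b := by
    rw [Finset.sum_congr rfl (fun i hi => by
      rw [if_neg (not_lt.mpr (Finset.mem_Ico.mp hi).1), if_pos (Finset.mem_Ico.mp hi).2]),
      Finset.sum_const, Nat.card_Ico, nsmul_eq_mul, Nat.cast_sub hkm]
  have h3 : ∑ i ∈ Finset.Ico m n, (if i < k then a else if i < m then b else c) = (n - m) * c := by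
    rw [Finset.sum_congr rfl (fun i hi => by
      rw [if_neg (not_lt.mpr (le_trans hkm (Finset.mem_Ico.mp hi).1)),
        if_neg (not_lt.mpr (Finset.mem_Ico.mp hi).1)]),
      Finset.sum_const, Nat.card_Ico, nsmul_eq_mul, Nat.cast_sub hmn]
  rw [h1, h2, h3]

open Set Filter Topology

lemma hull_mem (f : ℝ → ℝ) (I : Set ℝ) (u v s : ℝ) (hu : u ∈ I) (hv : v ∈ I)
    (hs : s ∈ Set.Icc (f u) (f v)) : s ∈ convexHull ℝ (f '' I) := by
  have h1 : f u ∈ convexHull ℝ (f '' I) := subset_convexHull ℝ _ ⟨u, hu, rfl⟩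
  have h2 : f v ∈ convexHull ℝ (f '' I) := subset_convexHull ℝ _ ⟨v, hv, rfl⟩
  exact (convex_convexHull ℝ (f '' I)).ordConnected.out h1 h2 hs

set_option maxHeartbeats 1000000

/-- a necessary floor-type condition for the comparison
`A_f^{[n]} ≤ A_g^{[n]}`. -/
theorem stmt16 (I : Set ℝ) (hIo : IsOpen I) (hIc : I.OrdConnected) (hne : I.Nonempty)
    (f g finvf finvg : ℝ → ℝ) (hf : StrictMonoOn f I) (hg : StrictMonoOn g I)
    (hinvf : IsGenInv I f finvf) (hinvg : IsGenInv I g finvg)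
    (n : ℕ) (hn : 2 ≤ n)
    (hcomp : ∀ x : Fin n → ℝ, (∀ i, x i ∈ I) → qam finvf f n x ≤ qam finvg g n x) :
    ∀ m : ℕ, 1 ≤ m → m ≤ n → ∀ x ∈ I, ∀ y ∈ I, x < y → ∀ t ∈ Ioo x y,
      ContinuousWithinAt f I t → ContinuousWithinAt g I t →
      ⌊(m : ℝ) * ((f y - f t) / (f y - f x))⌋ ≤ ⌊(m : ℝ) * ((g y - g t) / (g y - g x))⌋ := by
  intro m hm1 hmn x hx y hy hxy t ht hfc hgc
  have htI : t ∈ I := hIc.out hx hy ⟨ht.1.le, ht.2.le⟩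
  have hfxt : f x < f t := hf hx htI ht.1
  have hfty : f t < f y := hf htI hy ht.2
  have hgxt : g x < g t := hg hx htI ht.1
  have hgty : g t < g y := hg htI hy ht.2
  have hfxy : (0:ℝ) < f y - f x := by linarith
  have hgxy : (0:ℝ) < g y - g x := by linarith
  set k : ℤ := ⌊(m : ℝ) * ((f y - f t) / (f y - f x))⌋ with hkdef
  have hm0 : (0:ℝ) < m := by exact_mod_cast hm1
  have hn0 : (0:ℝ) < n := by positivity
  have hk0 : 0 ≤ k := by
    apply Int.floor_nonneg.mpr
    exact mul_nonneg hm0.le (div_pos (by linarith) hfxy).le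
  have hkm : k ≤ (m : ℤ) := by
    have : (m : ℝ) * ((f y - f t) / (f y - f x)) < m := by
      have : (f y - f t) / (f y - f x) < 1 := (div_lt_one hfxy).mpr (by linarith)
      nlinarith
    have := Int.floor_le_floor this.le
    simpa using this
  -- the key real inequality for f
  have hkf : (k : ℝ) * (f y - f x) ≤ (m : ℝ) * (f y - f t) := by
    have h := Int.floor_le ((m : ℝ) * ((f y - f t) / (f y - f x)))
    rw [← hkdef] at h
    rw [mul_div_assoc'] at h
    calc (k:ℝ) * (f y - f x) ≤ ((m : ℝ) * (f y - f t) / (f y - f x)) * (f y - f x) := by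
          apply mul_le_mul_of_nonneg_right h hfxy.le
      _ = (m : ℝ) * (f y - f t) := div_mul_cancel₀ _ hfxy.ne'
  -- reduce the goal
  rw [Int.le_floor]
  by_contra hcon
  push_neg at hcon
  have hkg : (m : ℝ) * (g y - g t) < (k : ℝ) * (g y - g x) := by
    rw [mul_div_assoc'] at hcon
    calc (m : ℝ) * (g y - g t) = ((m : ℝ) * (g y - g t) / (g y - g x)) * (g y - g x) :=
          (div_mul_cancel₀ _ hgxy.ne').symm
      _ < (k : ℝ) * (g y - g x) := by
          apply mul_lt_mul_of_pos_right hcon hgxy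
  -- set up natural number versions
  set k' : ℕ := k.toNat with hk'def
  have hkk' : (k' : ℝ) = (k : ℝ) := by
    rw [hk'def]
    exact_mod_cast Int.toNat_of_nonneg hk0
  have hk'm : k' ≤ m := by omega
  -- the test vector
  set X : Fin n → ℝ := fun i => if (i:ℕ) < k' then x else if (i:ℕ) < m then y else t with hXdef
  have hXI : ∀ i, X i ∈ I := by
    intro i
    rw [hXdef]
    dsimp only
    split
    · exact hx
    · split
      · exact hy
      · exact htI
  have hsumf : ∑ i, f (X i) = (k':ℝ) * f x + ((m:ℝ) - k') * f y + ((n:ℝ) - m) * f t := by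
    have : ∀ i : Fin n, f (X i)
        = if (i:ℕ) < k' then f x else if (i:ℕ) < m then f y else f t := by
      intro i; rw [hXdef]; dsimp only; split
      · rfl
      · split <;> rfl
    rw [Finset.sum_congr rfl (fun i _ => this i)]
    exact sum_pw n k' m hk'm hmn (f x) (f y) (f t)
  have hsumg : ∑ i, g (X i) = (k':ℝ) * g x + ((m:ℝ) - k') * g y + ((n:ℝ) - m) * g t := by
    have : ∀ i : Fin n, g (X i)
        = if (i:ℕ) < k' then g x else if (i:ℕ) < m then g y else g t := by
      intro i; rw [hXdef]; dsimp only; split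
      · rfl
      · split <;> rfl
    rw [Finset.sum_congr rfl (fun i _ => this i)]
    exact sum_pw n k' m hk'm hmn (g x) (g y) (g t)
  -- bounds on the averages
  have hknn : (0:ℝ) ≤ (k':ℝ) := by positivity
  have hmk : (0:ℝ) ≤ (m:ℝ) - k' := by
    rw [hkk']; exact_mod_cast sub_nonneg.mpr (by exact_mod_cast hkm : (k:ℝ) ≤ m)
  have hnm : (0:ℝ) ≤ (n:ℝ) - m := by
    have : (m:ℝ) ≤ n := by exact_mod_cast hmn
    linarith
  set Sf : ℝ := (k':ℝ) * f x + ((m:ℝ) - k') * f y + ((n:ℝ) - m) * f t with hSf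
  set Sg : ℝ := (k':ℝ) * g x + ((m:ℝ) - k') * g y + ((n:ℝ) - m) * g t with hSg
  have hSf_ge : (n:ℝ) * f t ≤ Sf := by
    rw [hSf, hkk']; nlinarith [hkf]
  have hSg_lt : Sg < (n:ℝ) * g t := by
    rw [hSg, hkk']; nlinarith [hkg]
  have hSf_mem : Sf / n ∈ Set.Icc (f x) (f y) := by
    constructor
    · rw [le_div_iff₀ hn0, hSf]
      nlinarith [mul_nonneg hmk (by linarith : (0:ℝ) ≤ f y - f x),
        mul_nonneg hnm (by linarith : (0:ℝ) ≤ f t - f x)]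
    · rw [div_le_iff₀ hn0, hSf]
      nlinarith [mul_nonneg hknn (by linarith : (0:ℝ) ≤ f y - f x),
        mul_nonneg hnm (by linarith : (0:ℝ) ≤ f y - f t)]
  have hSg_mem : Sg / n ∈ Set.Icc (g x) (g y) := by
    constructor
    · rw [le_div_iff₀ hn0, hSg]
      nlinarith [mul_nonneg hmk (by linarith : (0:ℝ) ≤ g y - g x),
        mul_nonneg hnm (by linarith : (0:ℝ) ≤ g t - g x)]
    · rw [div_le_iff₀ hn0, hSg]
      nlinarith [mul_nonneg hknn (by linarith : (0:ℝ) ≤ g y - g x),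
        mul_nonneg hnm (by linarith : (0:ℝ) ≤ g y - g t)]
  -- t ≤ A_f(X)
  have hAf : t ≤ qam finvf f n X := by
    have h1 : f t ≤ Sf / n := by rw [le_div_iff₀ hn0]; linarith [hSf_ge]
    have hmem1 : f t ∈ convexHull ℝ (f '' I) := subset_convexHull ℝ _ ⟨t, htI, rfl⟩
    have hmem2 : Sf / n ∈ convexHull ℝ (f '' I) := hull_mem f I x y _ hx hy hSf_mem
    have := hinvf.1 hmem1 hmem2 h1
    rw [hinvf.2.2.2 t htI] at this
    rw [qam, hsumf]
    exact this
  -- find t' < t with g t' > Sg / n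
  have hc : Sg / n < g t := by rw [div_lt_iff₀ hn0]; linarith [hSg_lt]
  obtain ⟨t', ht'g, ht'mem⟩ : ∃ t', Sg / n < g t' ∧ t' ∈ Ioo x t := by
    have hsub : Ioo x t ⊆ I := fun z hz => hIc.out hx htI ⟨hz.1.le, hz.2.le⟩
    have hcg : ContinuousWithinAt g (Ioo x t) t := hgc.mono hsub
    have hclos : t ∈ closure (Ioo x t) := by
      rw [closure_Ioo ht.1.ne]
      exact ⟨ht.1.le, le_refl t⟩
    have hNB : (𝓝[Ioo x t] t).NeBot := mem_closure_iff_nhdsWithin_neBot.mp hclos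
    have hev : ∀ᶠ s in 𝓝[Ioo x t] t, Sg / n < g s := hcg.eventually (eventually_gt_nhds hc)
    have hev2 : ∀ᶠ s in 𝓝[Ioo x t] t, s ∈ Ioo x t := eventually_mem_nhdsWithin
    exact (hev.and hev2).exists
  have ht'I : t' ∈ I := hIc.out hx htI ⟨ht'mem.1.le, ht'mem.2.le⟩
  -- A_g(X) ≤ t'
  have hAg : qam finvg g n X ≤ t' := by
    have h1 : Sg / n ≤ g t' := ht'g.le
    have hmem1 : g t' ∈ convexHull ℝ (g '' I) := subset_convexHull ℝ _ ⟨t', ht'I, rfl⟩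
    have hmem2 : Sg / n ∈ convexHull ℝ (g '' I) := hull_mem g I x y _ hx hy hSg_mem
    have := hinvg.1 hmem2 hmem1 h1
    rw [hinvg.2.2.2 t' ht'I] at this
    rw [qam, hsumg]
    exact this
  have := hcomp X hXI
  linarith [ht'mem.2]
end

section
/- Let f, g : I → ℝ be strictly increasing and n ≥ 2. If A_{f₊}^{[n]}(x) ≤ A_{g₋}^{[n]}(x) for all x ∈ Iⁿ, then f and g are both continuous on I. -/
/-!
Choosing `x = (t, w, …, w)` and applying the monotone left inverses turns the hypothesis into an
inverse-free two-point statement: if `f s ≤ (f₊ t + (n - 1) f₊ w) / n` and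
`(g₋ t + (n - 1) g₋ w) / n ≤ g σ`, then `s ≤ σ`. If `f` jumped at `t`, its left limit `ℓ` would
lie below `f₊ t`, so for `w < t` close to `t` the first mean would exceed `ℓ` and every `s < t`
would qualify; meanwhile `g₋ w < g₋ t` puts the second mean strictly below `g₋ t`, so some `σ < t`
qualifies as well, and an `s ∈ (σ, t)` gives `s ≤ σ < s`. Continuity of `g` is the same argument
after the reflection `x ↦ -x`, which exchanges `f` with `g` and right limits with left limits.
-/

open Set Filter Topology

section OneSidedLimits

variable {α β : Type*} [TopologicalSpace α] [LinearOrder α] [OrderTopology α] [DenselyOrdered α]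
  [TopologicalSpace β] [LinearOrder β] [OrderClosedTopology β]
  {f : α → β} {s : Set α} {a t : α} {l r : β}

theorem MonotoneOn.le_of_tendsto_nhdsLT_s18 [NoMinOrder α] (hf : MonotoneOn f s)
    (hs : s ∈ 𝓝[<] t) (ha : a ∈ s) (hat : a < t) (h : Tendsto f (𝓝[<] t) (𝓝 l)) : f a ≤ l :=
  ge_of_tendsto h <| by
    filter_upwards [hs, Ioo_mem_nhdsLT hat] with u hu hau using hf ha hu hau.1.le

theorem MonotoneOn.tendsto_nhdsLT_le [NoMinOrder α] (hf : MonotoneOn f s)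
    (hs : s ∈ 𝓝[<] t) (ht : t ∈ s) (h : Tendsto f (𝓝[<] t) (𝓝 l)) : l ≤ f t :=
  le_of_tendsto h <| by
    filter_upwards [hs, self_mem_nhdsWithin] with u hu hut using hf hu ht (le_of_lt hut)

theorem MonotoneOn.le_of_tendsto_nhdsGT_s18 [NoMaxOrder α] (hf : MonotoneOn f s)
    (hs : s ∈ 𝓝[>] t) (ht : t ∈ s) (h : Tendsto f (𝓝[>] t) (𝓝 l)) : f t ≤ l :=
  hf.dual.tendsto_nhdsLT_le (α := αᵒᵈ) (β := βᵒᵈ) hs ht h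

theorem MonotoneOn.tendsto_nhdsGT_le [NoMaxOrder α] (hf : MonotoneOn f s)
    (hs : s ∈ 𝓝[>] t) (ha : a ∈ s) (hta : t < a) (h : Tendsto f (𝓝[>] t) (𝓝 l)) : l ≤ f a :=
  hf.dual.le_of_tendsto_nhdsLT_s18 (α := αᵒᵈ) (β := βᵒᵈ) hs ha hta h

theorem StrictMonoOn.lt_of_tendsto_nhdsLT [NoMinOrder α] (hf : StrictMonoOn f s)
    (hs : s ∈ 𝓝[<] t) (ha : a ∈ s) (hat : a < t) (h : Tendsto f (𝓝[<] t) (𝓝 l)) : f a < l := by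
  obtain ⟨b, hb, hab⟩ := Filter.nonempty_of_mem (inter_mem hs (Ioo_mem_nhdsLT hat))
  exact (hf ha hb hab.1).trans_le (hf.monotoneOn.le_of_tendsto_nhdsLT_s18 hs hb hab.2 h)

theorem MonotoneOn.continuousAt_of_tendsto_of_le [NoMinOrder α] [NoMaxOrder α]
    (hf : MonotoneOn f s) (hs : s ∈ 𝓝 t) (hl : Tendsto f (𝓝[<] t) (𝓝 l))
    (hr : Tendsto f (𝓝[>] t) (𝓝 r)) (hrl : r ≤ l) : ContinuousAt f t := by
  have ht := mem_of_mem_nhds hs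
  have hlt := hf.tendsto_nhdsLT_le (nhdsWithin_le_nhds hs) ht hl
  have htr := hf.le_of_tendsto_nhdsGT_s18 (nhdsWithin_le_nhds hs) ht hr
  obtain rfl : l = f t := le_antisymm hlt (htr.trans hrl)
  obtain rfl : r = f t := le_antisymm (hrl.trans hlt) htr
  exact continuousAt_iff_continuous_left'_right'.2 ⟨hl, hr⟩

end OneSidedLimits

theorem MonotoneOn.exists_tendsto_nhdsLT {α β : Type*} [TopologicalSpace α] [LinearOrder α]
    [OrderTopology α] [DenselyOrdered α] [NoMinOrder α] [ConditionallyCompleteLinearOrder β]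
    [TopologicalSpace β] [OrderTopology β] {f : α → β} {s : Set α} {t : α}
    (hf : MonotoneOn f s) (hs : s ∈ 𝓝 t) : ∃ l, Tendsto f (𝓝[<] t) (𝓝 l) := by
  obtain ⟨y, hyt, hy⟩ := exists_Ioc_subset_of_mem_nhds hs (exists_lt t)
  refine ⟨_, (hf.mono (Ioo_subset_Ioc_self.trans hy)).tendsto_nhdsWithin_Ioo_left
    (nonempty_Ioo.2 hyt) ⟨f t, ?_⟩⟩
  rintro _ ⟨u, hu, rfl⟩
  exact hf (hy (Ioo_subset_Ioc_self hu)) (hy (right_mem_Ioc.2 hyt)) hu.2.le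

namespace IsGenInv

variable {I : Set ℝ} {f finv : ℝ → ℝ} {s y : ℝ}

theorem le_apply_of_le (h : IsGenInv I f finv) (hs : s ∈ I) (hy : y ∈ convexHull ℝ (f '' I))
    (hsy : f s ≤ y) : s ≤ finv y :=
  h.2.2.2 s hs ▸ h.1 (subset_convexHull ℝ _ (mem_image_of_mem f hs)) hy hsy

theorem apply_le_of_le (h : IsGenInv I f finv) (hs : s ∈ I) (hy : y ∈ convexHull ℝ (f '' I))
    (hys : y ≤ f s) : finv y ≤ s :=
  h.2.2.2 s hs ▸ h.1 hy (subset_convexHull ℝ _ (mem_image_of_mem f hs)) hys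

end IsGenInv

section ConvexHull

variable {I : Set ℝ} {f : ℝ → ℝ} {t l : ℝ}

theorem MonotoneOn.mem_convexHull_of_tendsto_nhdsGT (hf : MonotoneOn f I) (hI : IsOpen I)
    (ht : t ∈ I) (h : Tendsto f (𝓝[>] t) (𝓝 l)) : l ∈ convexHull ℝ (f '' I) := by
  have hIt : I ∈ 𝓝[>] t := mem_nhdsWithin_of_mem_nhds (hI.mem_nhds ht)
  obtain ⟨u, hu, htu⟩ := Filter.nonempty_of_mem (inter_mem hIt self_mem_nhdsWithin)
  exact (convex_convexHull ℝ _).ordConnected.out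
    (subset_convexHull ℝ _ (mem_image_of_mem f ht))
    (subset_convexHull ℝ _ (mem_image_of_mem f hu))
    ⟨hf.le_of_tendsto_nhdsGT_s18 hIt ht h, hf.tendsto_nhdsGT_le hIt hu htu h⟩

theorem MonotoneOn.mem_convexHull_of_tendsto_nhdsLT (hf : MonotoneOn f I) (hI : IsOpen I)
    (ht : t ∈ I) (h : Tendsto f (𝓝[<] t) (𝓝 l)) : l ∈ convexHull ℝ (f '' I) := by
  have hIt : I ∈ 𝓝[<] t := mem_nhdsWithin_of_mem_nhds (hI.mem_nhds ht)
  obtain ⟨u, hu, hut⟩ := Filter.nonempty_of_mem (inter_mem hIt self_mem_nhdsWithin)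
  exact (convex_convexHull ℝ _).ordConnected.out
    (subset_convexHull ℝ _ (mem_image_of_mem f hu))
    (subset_convexHull ℝ _ (mem_image_of_mem f ht))
    ⟨hf.le_of_tendsto_nhdsLT_s18 hIt hu hut h, hf.tendsto_nhdsLT_le hIt ht h⟩

end ConvexHull

theorem Convex.mul_add_one_sub_mul_mem {S : Set ℝ} (hS : Convex ℝ S) {x y a : ℝ} (hx : x ∈ S)
    (hy : y ∈ S) (ha₀ : 0 ≤ a) (ha₁ : a ≤ 1) : a * x + (1 - a) * y ∈ S := by
  simpa using hS hx hy ha₀ (sub_nonneg.2 ha₁) (add_sub_cancel a 1)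

/-- What `A_p ≤ A_q` gives at `x = (t, w, …, w)` with `a = 1/n`, when `f⁻¹`, `g⁻¹` are monotone
left inverses: `s ≤ f⁻¹(a * p t + (1 - a) * p w) ≤ g⁻¹(a * q t + (1 - a) * q w) ≤ σ`. -/
def TwoPointMeanLE (I : Set ℝ) (f g p q : ℝ → ℝ) (a : ℝ) : Prop :=
  ∀ t ∈ I, ∀ w ∈ I, ∀ s ∈ I, ∀ σ ∈ I,
    f s ≤ a * p t + (1 - a) * p w → a * q t + (1 - a) * q w ≤ g σ → s ≤ σ

namespace TwoPointMeanLE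

variable {I : Set ℝ} {f g p q : ℝ → ℝ} {a : ℝ}

theorem neg (h : TwoPointMeanLE I f g p q a) :
    TwoPointMeanLE (-I) (fun x => -g (-x)) (fun x => -f (-x)) (fun x => -q (-x))
      (fun x => -p (-x)) a := by
  intro t ht w hw s hs σ hσ hgs hfσ
  have := h (-t) ht (-w) hw (-σ) hσ (-s) hs (by linarith) (by linarith)
  linarith

theorem rightLim_le_leftLim (h : TwoPointMeanLE I f g p q a) (ha₀ : 0 < a) (ha₁ : a < 1)
    (hI : IsOpen I) (hf : MonotoneOn f I) (hg : StrictMonoOn g I) (hfp : ∀ x ∈ I, f x ≤ p x)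
    (hgq : ∀ x ∈ I, Tendsto g (𝓝[<] x) (𝓝 (q x))) {t l : ℝ} (ht : t ∈ I)
    (hl : Tendsto f (𝓝[<] t) (𝓝 l)) : p t ≤ l := by
  by_contra! hlt
  have hIt : I ∈ 𝓝[<] t := mem_nhdsWithin_of_mem_nhds (hI.mem_nhds ht)
  have hmix : Tendsto (fun w => a * p t + (1 - a) * f w) (𝓝[<] t)
      (𝓝 (a * p t + (1 - a) * l)) := tendsto_const_nhds.add (hl.const_mul _)
  have hlmix : l < a * p t + (1 - a) * l := by nlinarith
  obtain ⟨w, ⟨hlw, hw⟩, hwt⟩ := Filter.nonempty_of_mem <|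
    inter_mem (inter_mem (hmix.eventually (lt_mem_nhds hlmix)) hIt) self_mem_nhdsWithin
  have hL : l < a * p t + (1 - a) * p w := hlw.trans_le <|
    add_le_add_right (mul_le_mul_of_nonneg_left (hfp w hw) (sub_nonneg.2 ha₁.le)) _
  have hqw : q w < q t := ((hg.monotoneOn.tendsto_nhdsLT_le
    (mem_nhdsWithin_of_mem_nhds (hI.mem_nhds hw)) hw (hgq w hw))).trans_lt
    (hg.lt_of_tendsto_nhdsLT hIt hw hwt (hgq t ht))
  have hR : a * q t + (1 - a) * q w < q t := by nlinarith
  obtain ⟨σ, ⟨hσR, hσ⟩, hσt⟩ := Filter.nonempty_of_mem <|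
    inter_mem (inter_mem ((hgq t ht).eventually (lt_mem_nhds hR)) hIt) self_mem_nhdsWithin
  obtain ⟨σ', hσ', hσσ'⟩ := Filter.nonempty_of_mem (inter_mem hIt (Ioo_mem_nhdsLT hσt))
  have := h t ht w hw σ' hσ' σ hσ
    ((hf.le_of_tendsto_nhdsLT_s18 hIt hσ' hσσ'.2 hl).trans hL.le) (le_of_lt hσR)
  linarith [hσσ'.1]

theorem continuousOn_left (h : TwoPointMeanLE I f g p q a) (ha₀ : 0 < a) (ha₁ : a < 1)
    (hI : IsOpen I) (hf : MonotoneOn f I) (hg : StrictMonoOn g I)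
    (hfp : ∀ x ∈ I, Tendsto f (𝓝[>] x) (𝓝 (p x)))
    (hgq : ∀ x ∈ I, Tendsto g (𝓝[<] x) (𝓝 (q x))) : ContinuousOn f I := by
  intro t ht
  have hIt := hI.mem_nhds ht
  obtain ⟨l, hl⟩ := hf.exists_tendsto_nhdsLT hIt
  refine (hf.continuousAt_of_tendsto_of_le hIt hl (hfp t ht) ?_).continuousWithinAt
  refine h.rightLim_le_leftLim ha₀ ha₁ hI hf hg (fun x hx => ?_) hgq ht hl
  exact hf.le_of_tendsto_nhdsGT_s18 (mem_nhdsWithin_of_mem_nhds (hI.mem_nhds hx)) hx (hfp x hx)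

theorem continuousOn_right (h : TwoPointMeanLE I f g p q a) (ha₀ : 0 < a) (ha₁ : a < 1)
    (hI : IsOpen I) (hf : StrictMonoOn f I) (hg : MonotoneOn g I)
    (hfp : ∀ x ∈ I, Tendsto f (𝓝[>] x) (𝓝 (p x)))
    (hgq : ∀ x ∈ I, Tendsto g (𝓝[<] x) (𝓝 (q x))) : ContinuousOn g I := by
  have hcont := h.neg.continuousOn_left ha₀ ha₁ hI.neg
    (fun x hx y hy hxy => neg_le_neg (hg hy hx (neg_le_neg hxy)))
    (fun x hx y hy hxy => neg_lt_neg (hf hy hx (neg_lt_neg hxy)))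
    (fun x hx => ((hgq (-x) hx).comp (by simpa using tendsto_neg_nhdsGT_neg (a := -x))).neg)
    (fun x hx => ((hfp (-x) hx).comp (by simpa using tendsto_neg_nhdsLT_neg (a := -x))).neg)
  convert (hcont.comp continuousOn_neg fun x hx => show -(-x) ∈ I by simpa using hx).neg using 1
  ext x
  simp

end TwoPointMeanLE

theorem qam_cons_const (finv h : ℝ → ℝ) (m : ℕ) (a b : ℝ) :
    qam finv h (m + 1) (Fin.cons a fun _ => b) =
      finv ((1 / (m + 1 : ℕ)) * h a + (1 - 1 / (m + 1 : ℕ)) * h b) := by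
  simp only [qam, Fin.sum_univ_succ, Fin.cons_zero, Fin.cons_succ, Finset.sum_const,
    Finset.card_univ, Fintype.card_fin, nsmul_eq_mul]
  congr 1
  push_cast
  field_simp
  ring

theorem twoPointMeanLE_of_qam_le {I : Set ℝ} {f g p q finvf finvg : ℝ → ℝ} {m : ℕ}
    (hI : IsOpen I) (hf : MonotoneOn f I) (hg : MonotoneOn g I)
    (hfp : ∀ x ∈ I, Tendsto f (𝓝[>] x) (𝓝 (p x))) (hgq : ∀ x ∈ I, Tendsto g (𝓝[<] x) (𝓝 (q x)))
    (hinvf : IsGenInv I f finvf) (hinvg : IsGenInv I g finvg)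
    (hle : ∀ x : Fin (m + 1) → ℝ, (∀ i, x i ∈ I) →
      qam finvf p (m + 1) x ≤ qam finvg q (m + 1) x) :
    TwoPointMeanLE I f g p q (1 / (m + 1 : ℕ)) := by
  intro t ht w hw s hs σ hσ hfs hgσ
  have ha₀ : (0 : ℝ) ≤ 1 / (m + 1 : ℕ) := by positivity
  have ha₁ : 1 / ((m + 1 : ℕ) : ℝ) ≤ 1 := div_le_one_of_le₀ (by simp) (by positivity)
  have hmean := hle (Fin.cons t fun _ => w) (Fin.cases ht fun _ => hw)
  rw [qam_cons_const, qam_cons_const] at hmean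
  calc s ≤ finvf _ := hinvf.le_apply_of_le hs ((convex_convexHull ℝ _).mul_add_one_sub_mul_mem
          (hf.mem_convexHull_of_tendsto_nhdsGT hI ht (hfp t ht))
          (hf.mem_convexHull_of_tendsto_nhdsGT hI hw (hfp w hw)) ha₀ ha₁) hfs
    _ ≤ finvg _ := hmean
    _ ≤ σ := hinvg.apply_le_of_le hσ ((convex_convexHull ℝ _).mul_add_one_sub_mul_mem
          (hg.mem_convexHull_of_tendsto_nhdsLT hI ht (hgq t ht))
          (hg.mem_convexHull_of_tendsto_nhdsLT hI hw (hgq w hw)) ha₀ ha₁) hgσ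

theorem stmt18_general (I : Set ℝ) (hIo : IsOpen I)
    (f g fp gm finvf finvg : ℝ → ℝ)
    (hf : StrictMonoOn f I) (hg : StrictMonoOn g I)
    (hfp : ∀ x ∈ I, Tendsto f (𝓝[>] x) (𝓝 (fp x)))
    (hgm : ∀ x ∈ I, Tendsto g (𝓝[<] x) (𝓝 (gm x)))
    (hinvf : IsGenInv I f finvf) (hinvg : IsGenInv I g finvg)
    (n : ℕ) (hn : 2 ≤ n)
    (hcomp : ∀ x : Fin n → ℝ, (∀ i, x i ∈ I) → qam finvf fp n x ≤ qam finvg gm n x) :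
    ContinuousOn f I ∧ ContinuousOn g I := by
  obtain ⟨m, rfl⟩ : ∃ m, n = m + 1 := ⟨n - 1, by omega⟩
  have hmean := twoPointMeanLE_of_qam_le hIo hf.monotoneOn hg.monotoneOn hfp hgm hinvf hinvg hcomp
  have ha₀ : (0 : ℝ) < 1 / (m + 1 : ℕ) := by positivity
  have ha₁ : 1 / ((m + 1 : ℕ) : ℝ) < 1 := by
    rw [div_lt_one (by positivity)]
    exact_mod_cast hn
  exact ⟨hmean.continuousOn_left ha₀ ha₁ hIo hf.monotoneOn hg hfp hgm,
    hmean.continuousOn_right ha₀ ha₁ hIo hf hg.monotoneOn hfp hgm⟩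

/-- if `A_{f₊}^{[n]} ≤ A_{g₋}^{[n]}` on `Iⁿ` for some `n ≥ 2`, then `f` and
`g` are continuous on `I`. (The generalized inverses of `f₊` and `f`, resp. of `g₋` and
`g`, coincide.) -/
theorem stmt18 (I : Set ℝ) (hIo : IsOpen I) (hIc : I.OrdConnected) (hne : I.Nonempty)
    (f g fp gm finvf finvg : ℝ → ℝ)
    (hf : StrictMonoOn f I) (hg : StrictMonoOn g I)
    (hfp : ∀ x ∈ I, Tendsto f (𝓝[>] x) (𝓝 (fp x)))
    (hgm : ∀ x ∈ I, Tendsto g (𝓝[<] x) (𝓝 (gm x)))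
    (hinvf : IsGenInv I f finvf) (hinvg : IsGenInv I g finvg)
    (n : ℕ) (hn : 2 ≤ n)
    (hcomp : ∀ x : Fin n → ℝ, (∀ i, x i ∈ I) → qam finvf fp n x ≤ qam finvg gm n x) :
    ContinuousOn f I ∧ ContinuousOn g I :=
  stmt18_general I hIo f g fp gm finvf finvg hf hg hfp hgm hinvf hinvg n hn hcomp
end

section
/- Let n ≥ 2, let I be a nonempty open interval containing 0 with sup I = +∞, and define 𝔐^{[n]} : Iⁿ → ℝ by 𝔐^{[n]}(x) = 0 if min(x) ≤ 0 ≤ max(x) and 𝔐^{[n]}(x) = (x₁+⋯+xₙ)/n otherwise. Then there is no strictly increasing function f : I → ℝ such that 𝔐^{[n]}(x) = A_f^{[n]}(x) for all x ∈ Iⁿ. In contrast, if I = (a,b) is bounded with a < 0 < b, then such a strictly increasing f exists. -/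
open Set Filter Topology

open Classical in
/-- The mean `𝔐^{[n]}`: equal to `0` if `min x ≤ 0 ≤ max x`, and to the arithmetic mean
otherwise. -/
noncomputable def frakM (n : ℕ) (x : Fin n → ℝ) : ℝ :=
  if (∃ i, x i ≤ 0) ∧ (∃ i, 0 ≤ x i) then 0 else (∑ i, x i) / n

/-! If `I` is unbounded above, the vector `(t, 0, …, 0)` has mean `0`, which bounds `f t` by
`n f(1) - (n - 1) f(0)` for `t ≥ 0`; so `f` is bounded above on `I`, with supremum `L`, say.
Choosing `s` with `f s` close enough to `L`, the vector `(1, ns, …, ns)` has mean larger than `s`,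
while its `f`-mean is below `f s`, so that `A_f` of it is at most `s`.

On a bounded `(a, b)` the witness `f` is affine on `(a, 0)` and on `(0, b)`, so `A_f` is the
arithmetic mean on vectors of one sign. Its jumps of size `1` at `0` and the small slopes put the
`f`-mean of every vector of mixed signs into `[-1, 1]`, an interval the generalized inverse
collapses to `0`. -/

lemma Fintype.sum_ite_eq_add_mul {ι : Type*} [Fintype ι] [DecidableEq ι] (j : ι) (c d : ℝ) :
    ∑ i, (if i = j then c else d) = c + (Fintype.card ι - 1) * d := by
  have h (i : ι) : (if i = j then c else d) = d + if i = j then c - d else 0 := by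
    split_ifs <;> ring
  simp only [h, Finset.sum_add_distrib, Finset.sum_ite_eq', Finset.mem_univ, if_true,
    Finset.sum_const, Finset.card_univ, nsmul_eq_mul]
  ring

lemma Fintype.sum_le_card_sub_one_mul {ι : Type*} [Fintype ι] {g : ι → ℝ} {c : ℝ} (j : ι)
    (hj : g j ≤ 0) (hg : ∀ i, g i ≤ c) : ∑ i, g i ≤ (Fintype.card ι - 1) * c := by
  classical
  calc ∑ i, g i ≤ ∑ i, (if i = j then 0 else c) :=
        Finset.sum_le_sum fun i _ => by split_ifs with h <;> [exact h ▸ hj; exact hg i]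
    _ = (Fintype.card ι - 1) * c := by rw [Fintype.sum_ite_eq_add_mul, zero_add]

lemma Fin.sum_apply_ite {n : ℕ} (g : ℝ → ℝ) (j : Fin n) (c d : ℝ) :
    ∑ i, g (if i = j then c else d) = g c + (n - 1) * g d := by
  simp only [apply_ite g, Fintype.sum_ite_eq_add_mul, Fintype.card_fin]

section frakM

variable {n : ℕ} {x : Fin n → ℝ}

lemma frakM_of_nonpos_of_nonneg {j k : Fin n} (hj : x j ≤ 0) (hk : 0 ≤ x k) : frakM n x = 0 :=
  if_pos ⟨⟨j, hj⟩, ⟨k, hk⟩⟩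

lemma frakM_of_forall_pos (hx : ∀ i, 0 < x i) : frakM n x = (∑ i, x i) / n :=
  if_neg fun ⟨⟨i, hi⟩, _⟩ => (hx i).not_ge hi

lemma frakM_of_forall_neg (hx : ∀ i, x i < 0) : frakM n x = (∑ i, x i) / n :=
  if_neg fun ⟨_, ⟨i, hi⟩⟩ => (hx i).not_ge hi

end frakM

section IsGenInv

variable {I : Set ℝ} {f finv : ℝ → ℝ} {n : ℕ} {x : Fin n → ℝ} {u : ℝ}

lemma mean_mem_convexHull_s19 (hn : n ≠ 0) (hx : ∀ i, x i ∈ I) :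
    (∑ i, f (x i)) / n ∈ convexHull ℝ (f '' I) := by
  have hn' : (n : ℝ) ≠ 0 := Nat.cast_ne_zero.2 hn
  rw [Finset.sum_div]
  simp_rw [div_eq_inv_mul, ← smul_eq_mul]
  refine (convex_convexHull ℝ _).sum_mem (fun _ _ => by positivity) ?_
    fun i _ => subset_convexHull ℝ _ ⟨x i, hx i, rfl⟩
  simp [hn']

lemma IsGenInv.le_qam (hg : IsGenInv I f finv) (hn : n ≠ 0) (hx : ∀ i, x i ∈ I) (hu : u ∈ I)
    (h : f u ≤ (∑ i, f (x i)) / n) : u ≤ qam finv f n x := by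
  have := hg.1 (subset_convexHull ℝ _ ⟨u, hu, rfl⟩) (mean_mem_convexHull_s19 hn hx) h
  rwa [hg.2.2.2 u hu] at this

lemma IsGenInv.qam_le (hg : IsGenInv I f finv) (hn : n ≠ 0) (hx : ∀ i, x i ∈ I) (hu : u ∈ I)
    (h : (∑ i, f (x i)) / n ≤ f u) : qam finv f n x ≤ u := by
  have := hg.1 (mean_mem_convexHull_s19 hn hx) (subset_convexHull ℝ _ ⟨u, hu, rfl⟩) h
  rwa [hg.2.2.2 u hu] at this

end IsGenInv

section Unbounded

variable {I : Set ℝ} {f finv : ℝ → ℝ} {n : ℕ}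

lemma bddAbove_image_of_frakM_eq_qam (hn : 2 ≤ n) (hf : StrictMonoOn f I)
    (hg : IsGenInv I f finv) (hM : ∀ x : Fin n → ℝ, (∀ i, x i ∈ I) → frakM n x = qam finv f n x)
    (h0 : 0 ∈ I) (h1 : 1 ∈ I) : BddAbove (f '' I) := by
  have hn0 : (0 : ℝ) < n := by positivity
  have h01 : f 0 < f 1 := hf h0 h1 one_pos
  refine ⟨n * f 1 - (n - 1) * f 0, ?_⟩
  rintro _ ⟨t, ht, rfl⟩
  rcases lt_or_ge t 0 with ht0 | ht0
  · nlinarith [hf ht h0 ht0]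
  by_contra! hlt
  let j : Fin n := ⟨0, by omega⟩
  have : Nontrivial (Fin n) := Fin.nontrivial_iff_two_le.2 hn
  obtain ⟨k, hk⟩ := exists_ne j
  let x : Fin n → ℝ := fun i => if i = j then t else 0
  have hx : ∀ i, x i ∈ I := fun i => by dsimp only [x]; split_ifs <;> assumption
  have hzero : qam finv f n x = 0 := by
    rw [← hM x hx, frakM_of_nonpos_of_nonneg (j := k) (k := k)] <;> simp [x, hk]
  have h1x := hg.le_qam (by omega) hx h1 (by
    rw [Fin.sum_apply_ite, le_div_iff₀ hn0]; linarith)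
  linarith

theorem not_forall_frakM_eq_qam_of_not_bddAbove (hn : 2 ≤ n) (hI : I.OrdConnected)
    (h0 : 0 ∈ I) (hI' : ¬BddAbove I) (hf : StrictMonoOn f I) (hg : IsGenInv I f finv) :
    ¬∀ x : Fin n → ℝ, (∀ i, x i ∈ I) → frakM n x = qam finv f n x := by
  intro hM
  have hn' : (2 : ℝ) ≤ n := by exact_mod_cast hn
  have hIci : ∀ t, 0 ≤ t → t ∈ I := fun t ht =>
    let ⟨u, hu, htu⟩ := not_bddAbove_iff.1 hI' t
    hI.out h0 hu ⟨ht, htu.le⟩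
  have h1 := hIci 1 zero_le_one
  have h2 := hIci 2 zero_le_two
  have hB := bddAbove_image_of_frakM_eq_qam hn hf hg hM h0 h1
  set L := sSup (f '' I)
  have hfL : ∀ t ∈ I, f t ≤ L := fun t ht => le_csSup hB ⟨t, ht, rfl⟩
  have h1L : f 1 < L := (hf h1 h2 one_lt_two).trans_le (hfL 2 h2)
  have hθ : (f 1 + (n - 1) * L) / n < L := by rw [div_lt_iff₀ (by positivity)]; linarith
  obtain ⟨_, ⟨s, hs, rfl⟩, hθs⟩ := exists_lt_of_lt_csSup (Nonempty.image f ⟨0, h0⟩) hθ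
  have hs1 : 1 < s := by
    by_contra! hs1
    have : f 1 ≤ (f 1 + (n - 1) * L) / n := by rw [le_div_iff₀ (by positivity)]; nlinarith
    linarith [hf.monotoneOn hs h1 hs1]
  let x : Fin n → ℝ := fun i => if i = ⟨0, by omega⟩ then 1 else n * s
  have hpos : ∀ i, 0 < x i := fun i => by dsimp only [x]; split_ifs <;> positivity
  have hx : ∀ i, x i ∈ I := fun i => hIci _ (hpos i).le
  have hns : f (n * s) ≤ L := hfL _ (hIci _ (by positivity))
  have hle := hg.qam_le (by omega) hx hs (by
    rw [Fin.sum_apply_ite]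
    refine le_trans ?_ hθs.le
    gcongr
    linarith)
  rw [← hM x hx, frakM_of_forall_pos hpos, Fintype.sum_ite_eq_add_mul, Fintype.card_fin,
    div_le_iff₀ (by positivity)] at hle
  nlinarith [mul_nonneg (sub_nonneg.2 hn') (by positivity : (0 : ℝ) ≤ n * s)]

end Unbounded

section LeftInverse

variable {f finv : ℝ → ℝ}

lemma strictMono_of_leftInverse (hm : Monotone finv) (hl : Function.LeftInverse finv f) :
    StrictMono f := fun x y hxy =>
  lt_of_not_ge fun h => hxy.not_ge (by simpa only [hl _] using hm h)

lemma isGenInv_of_leftInverse {I : Set ℝ} (hI : I.OrdConnected) (hm : Monotone finv)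
    (hc : Continuous finv) (hl : Function.LeftInverse finv f) : IsGenInv I f finv := by
  refine ⟨hm.monotoneOn _, hc.continuousOn, fun y hy => ?_, fun x _ => hl x⟩
  have hconv : Convex ℝ (finv ⁻¹' I) :=
    OrdConnected.convex ⟨fun y₁ h₁ y₂ h₂ _ hy => hI.out h₁ h₂ ⟨hm hy.1, hm hy.2⟩⟩
  exact convexHull_min (by rintro _ ⟨x, hx, rfl⟩; simpa [mem_preimage, hl x]) hconv hy

end LeftInverse

noncomputable def frakMGen (a b : ℝ) (n : ℕ) (x : ℝ) : ℝ :=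
  if x < 0 then -x / (a * n) - 1 else if x = 0 then 0 else x / (b * n) + 1

noncomputable def frakMGenInv (a b : ℝ) (n : ℕ) (y : ℝ) : ℝ :=
  -(a * n) * min (y + 1) 0 + b * n * max (y - 1) 0

section Generator

variable {a b : ℝ} {n : ℕ} {x : ℝ}

lemma frakMGen_of_neg (hx : x < 0) : frakMGen a b n x = -x / (a * n) - 1 := if_pos hx

lemma frakMGen_zero : frakMGen a b n 0 = 0 := by simp [frakMGen]

lemma frakMGen_of_pos (hx : 0 < x) : frakMGen a b n x = x / (b * n) + 1 := by
  simp [frakMGen, hx.not_gt, hx.ne']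

lemma frakMGen_nonpos (ha : a < 0) (hx : x ≤ 0) : frakMGen a b n x ≤ 0 := by
  rcases hx.lt_or_eq with hx | rfl
  · rw [frakMGen_of_neg hx]
    have : -x / (a * n) ≤ 0 := div_nonpos_of_nonneg_of_nonpos (by linarith) (by nlinarith)
    linarith
  · exact frakMGen_zero.le

lemma frakMGen_nonneg (hb : 0 < b) (hx : 0 ≤ x) : 0 ≤ frakMGen a b n x := by
  rcases hx.lt_or_eq with hx | rfl
  · rw [frakMGen_of_pos hx]; positivity
  · exact frakMGen_zero.ge

lemma frakMGen_le (ha : a < 0) (hb : 0 < b) (hx : x < b) :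
    frakMGen a b n x ≤ 1 + 1 / n := by
  rcases le_or_gt x 0 with hx0 | hx0
  · linarith [frakMGen_nonpos (b := b) (n := n) ha hx0, (by positivity : (0 : ℝ) ≤ 1 / n)]
  · rw [frakMGen_of_pos hx0, add_comm, div_mul_eq_div_div]
    gcongr
    exact (div_le_one hb).2 hx.le

lemma neg_le_frakMGen (ha : a < 0) (hb : 0 < b) (hx : a < x) :
    -(1 + 1 / n) ≤ frakMGen a b n x := by
  rcases le_or_gt 0 x with hx0 | hx0
  · linarith [frakMGen_nonneg (a := a) (n := n) hb hx0, (by positivity : (0 : ℝ) ≤ 1 / n)]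
  · have : x / a / n ≤ 1 / n := by gcongr; exact (div_le_one_of_neg ha).2 hx.le
    rw [frakMGen_of_neg hx0, neg_div, div_mul_eq_div_div]
    linarith

lemma frakMGenInv_frakMGen (ha : a < 0) (hb : 0 < b) (hn : n ≠ 0) :
    Function.LeftInverse (frakMGenInv a b n) (frakMGen a b n) := by
  have hn' : (n : ℝ) ≠ 0 := Nat.cast_ne_zero.2 hn
  intro x
  rcases lt_trichotomy x 0 with hx | rfl | hx
  · have : -x / (a * n) ≤ 0 := div_nonpos_of_nonneg_of_nonpos (by linarith) (by nlinarith)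
    rw [frakMGen_of_neg hx, frakMGenInv, min_eq_left (by linarith), max_eq_right (by linarith)]
    field_simp [ha.ne]
    ring
  · simp [frakMGen_zero, frakMGenInv]
  · have : 0 ≤ x / (b * n) := by positivity
    rw [frakMGen_of_pos hx, frakMGenInv, min_eq_right (by linarith), max_eq_left (by linarith)]
    field_simp
    ring

lemma monotone_frakMGenInv (ha : a < 0) (hb : 0 < b) : Monotone (frakMGenInv a b n) :=
  fun y z hyz => by
    unfold frakMGenInv
    have : 0 ≤ -(a * n) := by nlinarith [(Nat.cast_nonneg n : (0 : ℝ) ≤ n)]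
    gcongr

lemma continuous_frakMGenInv : Continuous (frakMGenInv a b n) := by
  unfold frakMGenInv
  fun_prop

lemma frakMGenInv_of_mem_Icc {y : ℝ} (hy : y ∈ Icc (-1) 1) : frakMGenInv a b n y = 0 := by
  rw [frakMGenInv, min_eq_right (by linarith [hy.1]), max_eq_right (by linarith [hy.2])]
  ring

end Generator

section GeneratorMeans

variable {a b : ℝ} {n : ℕ} {x : Fin n → ℝ}

lemma sum_frakMGen_div_of_forall_pos (hn : n ≠ 0) (hx : ∀ i, 0 < x i) :
    (∑ i, frakMGen a b n (x i)) / n = frakMGen a b n ((∑ i, x i) / n) := by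
  have : Nonempty (Fin n) := ⟨⟨0, Nat.pos_of_ne_zero hn⟩⟩
  have hS : 0 < ∑ i, x i := Finset.sum_pos (fun i _ => hx i) Finset.univ_nonempty
  rw [frakMGen_of_pos (by positivity)]
  simp only [frakMGen_of_pos (hx _), Finset.sum_add_distrib, ← Finset.sum_div, Finset.sum_const,
    Finset.card_univ, Fintype.card_fin, nsmul_eq_mul, mul_one]
  field_simp

lemma sum_frakMGen_div_of_forall_neg (hn : n ≠ 0) (hx : ∀ i, x i < 0) :
    (∑ i, frakMGen a b n (x i)) / n = frakMGen a b n ((∑ i, x i) / n) := by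
  have : Nonempty (Fin n) := ⟨⟨0, Nat.pos_of_ne_zero hn⟩⟩
  have hS : ∑ i, x i < 0 := Finset.sum_neg (fun i _ => hx i) Finset.univ_nonempty
  rw [frakMGen_of_neg (div_neg_of_neg_of_pos hS (by positivity))]
  simp only [frakMGen_of_neg (hx _), Finset.sum_sub_distrib, ← Finset.sum_div,
    Finset.sum_neg_distrib, Finset.sum_const, Finset.card_univ, Fintype.card_fin, nsmul_eq_mul,
    mul_one]
  field_simp

lemma sum_frakMGen_div_mem_Icc (ha : a < 0) (hb : 0 < b) (hn : n ≠ 0)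
    (hx : ∀ i, x i ∈ Ioo a b) {j k : Fin n} (hj : x j ≤ 0) (hk : 0 ≤ x k) :
    (∑ i, frakMGen a b n (x i)) / n ∈ Icc (-1) 1 := by
  have hn' : (0 : ℝ) < n := by positivity
  have hc : ((n : ℝ) - 1) * (1 + 1 / n) ≤ n := by
    rw [mul_one_add, mul_one_div, sub_div, div_self hn'.ne']
    linarith [(by positivity : (0 : ℝ) ≤ 1 / n)]
  have hup := Fintype.sum_le_card_sub_one_mul j (frakMGen_nonpos (n := n) ha hj)
    fun i => frakMGen_le ha hb (hx i).2
  have hlo := Fintype.sum_le_card_sub_one_mul (g := fun i => -frakMGen a b n (x i)) k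
    (neg_nonpos.2 (frakMGen_nonneg hb hk)) fun i => neg_le.1 (neg_le_frakMGen ha hb (hx i).1)
  rw [Fintype.card_fin] at hup hlo
  rw [Finset.sum_neg_distrib] at hlo
  constructor
  · rw [le_div_iff₀ hn']; linarith
  · rw [div_le_iff₀ hn']; linarith

lemma frakM_eq_qam_frakMGen (ha : a < 0) (hb : 0 < b) (hn : n ≠ 0)
    (hx : ∀ i, x i ∈ Ioo a b) : frakM n x = qam (frakMGenInv a b n) (frakMGen a b n) n x := by
  have hl := frakMGenInv_frakMGen ha hb hn
  by_cases hmix : (∃ j, x j ≤ 0) ∧ ∃ k, 0 ≤ x k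
  · obtain ⟨⟨j, hj⟩, ⟨k, hk⟩⟩ := hmix
    rw [frakM_of_nonpos_of_nonneg hj hk, qam,
      frakMGenInv_of_mem_Icc (sum_frakMGen_div_mem_Icc ha hb hn hx hj hk)]
  simp only [not_and_or, not_exists, not_le] at hmix
  rcases hmix with hpos | hneg
  · rw [frakM_of_forall_pos hpos, qam, sum_frakMGen_div_of_forall_pos hn hpos, hl]
  · rw [frakM_of_forall_neg hneg, qam, sum_frakMGen_div_of_forall_neg hn hneg, hl]

theorem exists_isGenInv_frakM_eq_qam (ha : a < 0) (hb : 0 < b) (hn : n ≠ 0) :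
    ∃ f finv : ℝ → ℝ, StrictMonoOn f (Ioo a b) ∧ IsGenInv (Ioo a b) f finv ∧
      ∀ x : Fin n → ℝ, (∀ i, x i ∈ Ioo a b) → frakM n x = qam finv f n x := by
  have hl := frakMGenInv_frakMGen ha hb hn
  have hm := monotone_frakMGenInv (n := n) ha hb
  exact ⟨frakMGen a b n, frakMGenInv a b n, (strictMono_of_leftInverse hm hl).strictMonoOn _,
    isGenInv_of_leftInverse ordConnected_Ioo hm continuous_frakMGenInv hl,
    fun _ hx => frakM_eq_qam_frakMGen ha hb hn hx⟩

end GeneratorMeans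

/-- if `I` is an open interval containing `0` that is unbounded above, then
`𝔐^{[n]}` restricted to `Iⁿ` is not a generalized quasiarithmetic mean; if `I = (a,b)` is
bounded with `a < 0 < b`, then it is. -/
theorem stmt19 (n : ℕ) (hn : 2 ≤ n) :
    (∀ I : Set ℝ, IsOpen I → I.OrdConnected → 0 ∈ I → ¬ BddAbove I →
      ¬ ∃ f finv : ℝ → ℝ, StrictMonoOn f I ∧ IsGenInv I f finv ∧
        ∀ x : Fin n → ℝ, (∀ i, x i ∈ I) → frakM n x = qam finv f n x) ∧
    (∀ a b : ℝ, a < 0 → 0 < b →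
      ∃ f finv : ℝ → ℝ, StrictMonoOn f (Ioo a b) ∧ IsGenInv (Ioo a b) f finv ∧
        ∀ x : Fin n → ℝ, (∀ i, x i ∈ Ioo a b) → frakM n x = qam finv f n x) :=
  ⟨fun _ _ hI h0 hI' ⟨_, _, hf, hg, hM⟩ =>
      not_forall_frakM_eq_qam_of_not_bddAbove hn hI h0 hI' hf hg hM,
    fun _ _ ha hb => exists_isGenInv_frakM_eq_qam ha hb (by omega)⟩
end
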